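/- arXiv:1603.06752 — 8 statements merged into one kernel-verified Lean document; each statement's English description precedes it below -/
import Mathlib

section
/- Let ε ∈ U(m) be unitary and skew-symmetric, and let α ∈ U(m). If there exists γ ∈ U(m) with α = ε⁻¹·γᵗ·ε·γ, then ε·α = αᵗ·ε. Conversely, if ε·α = αᵗ·ε, then such a γ ∈ U(m) exists; explicitly, writing α = exp(i·h) with h self-adjoint with spectrum in (-π, π], one can take γ = exp(i·h/2). -/
/-!
Since `ε` is skew-symmetric, `(ε⁻¹)ᵀ = -ε⁻¹`, so `α = ε⁻¹ γᵀ ε γ` gives `ε α = γᵀ ε γ = αᵀ ε`.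
Conversely, on self-adjoint elements of a C⋆-algebra with finite spectrum in `(-π, π]`, the
functional calculus `cfc arg` is a left inverse of `h ↦ exp (i h)`, and for a unitary `α` with
finite spectrum `h = cfc arg α` is such a logarithm. Now `ε α ε⁻¹ = αᵀ` says that
`hᵀ` and `ε h ε⁻¹` are two such logarithms of `αᵀ`, so `hᵀ = ε h ε⁻¹`; hence
`γ = exp (i h / 2)` satisfies `γᵀ = ε γ ε⁻¹` and `ε⁻¹ γᵀ ε γ = γ² = α`.
-/

open Matrix Complex

section CStarAlgebra

variable {A : Type*} [CStarAlgebra A]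

lemma IsSelfAdjoint.cfc_arg_exp_I_smul {x : A} (hx : IsSelfAdjoint x)
    (hfin : (spectrum ℂ x).Finite)
    (hspec : ∀ μ ∈ spectrum ℂ x, μ.re ∈ Set.Ioc (-Real.pi) Real.pi) :
    cfc (arg · : ℂ → ℂ) (NormedSpace.exp (I • x)) = x := by
  have := hx.isStarNormal
  rw [← CFC.exp_eq_normedSpace_exp (𝕜 := ℂ), ← cfc_comp_smul .., ← cfc_comp' (hg := ?hg)]
  case hg => exact (hfin.image _).continuousOn _
  conv_rhs => rw [← cfc_id' ℂ x]
  refine cfc_congr fun y hy ↦ ?_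
  rw [← hx.spectrumRestricts.algebraMap_image] at hy hspec
  obtain ⟨y, hy, rfl⟩ := hy
  have := hspec _ ⟨y, hy, rfl⟩
  simp only [coe_algebraMap, ofReal_re, Set.mem_Ioc] at this
  simp only [coe_algebraMap, smul_eq_mul, mul_comm I, ← exp_eq_exp_ℂ, ofReal_inj]
  rw [← Circle.coe_exp, Circle.arg_exp this.1 this.2]

lemma Unitary.exp_I_smul_cfc_arg {u : A} (hu : u ∈ unitary A) (hfin : (spectrum ℂ u).Finite) :
    NormedSpace.exp (I • cfc (arg · : ℂ → ℂ) u) = u := by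
  have : ContinuousOn arg (spectrum ℂ u) := hfin.continuousOn _
  rw [← CFC.exp_eq_normedSpace_exp (𝕜 := ℂ), ← cfc_comp_smul .., ← cfc_comp' ..]
  conv_rhs => rw [← cfc_id' ℂ u]
  refine cfc_congr fun y hy ↦ ?_
  have hy₁ : ‖y‖ = 1 := spectrum.norm_eq_one_of_unitary hu hy
  have : I * y.arg = log y :=
    Complex.ext (by simp [log_re, hy₁]) (by simp [log_im])
  simpa [← exp_eq_exp_ℂ, this] using exp_log (by rintro rfl; simp at hy₁)

lemma Unitary.exists_isSelfAdjoint_log {u : A} (hu : u ∈ unitary A)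
    (hfin : (spectrum ℂ u).Finite) :
    ∃ h : A, IsSelfAdjoint h ∧ (∀ μ ∈ spectrum ℂ h, μ.re ∈ Set.Ioc (-Real.pi) Real.pi) ∧
      u = NormedSpace.exp (I • h) := by
  have := isStarNormal_of_mem_unitary hu
  refine ⟨cfc (arg · : ℂ → ℂ) u, .cfc_arg u, ?_, (Unitary.exp_I_smul_cfc_arg hu hfin).symm⟩
  rw [cfc_map_spectrum (arg · : ℂ → ℂ) u (hf := hfin.continuousOn _)]
  rintro - ⟨z, -, rfl⟩
  simpa using arg_mem_Ioc z

lemma IsSelfAdjoint.eq_of_exp_I_smul_eq {x y : A} (hx : IsSelfAdjoint x) (hy : IsSelfAdjoint y)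
    (hxfin : (spectrum ℂ x).Finite) (hyfin : (spectrum ℂ y).Finite)
    (hxspec : ∀ μ ∈ spectrum ℂ x, μ.re ∈ Set.Ioc (-Real.pi) Real.pi)
    (hyspec : ∀ μ ∈ spectrum ℂ y, μ.re ∈ Set.Ioc (-Real.pi) Real.pi)
    (hexp : NormedSpace.exp (I • x) = NormedSpace.exp (I • y)) : x = y := by
  rw [← hx.cfc_arg_exp_I_smul hxfin hxspec, hexp, hy.cfc_arg_exp_I_smul hyfin hyspec]

end CStarAlgebra

namespace Matrix

variable {n : Type*} [Fintype n] [DecidableEq n]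

lemma spectrum_transpose {R : Type*} [CommRing R] (M : Matrix n n R) :
    spectrum R Mᵀ = spectrum R M := by
  ext r
  rw [spectrum.mem_iff, spectrum.mem_iff, ← isUnit_transpose, transpose_sub,
    algebraMap_eq_diagonal, diagonal_transpose, transpose_transpose]

lemma mul_eq_transpose_mul_of_transpose_eq_neg {R : Type*} [CommRing R] {ε γ α : Matrix n n R}
    (hε : IsUnit ε) (hskew : εᵀ = -ε) (hα : α = ε⁻¹ * γᵀ * ε * γ) : ε * α = αᵀ * ε := by
  have hεdet : IsUnit ε.det := (isUnit_iff_isUnit_det ε).mp hε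
  have hεT : (ε⁻¹)ᵀ = -ε⁻¹ := by
    rw [transpose_nonsing_inv, hskew]
    exact inv_eq_left_inv (by rw [neg_mul_neg, nonsing_inv_mul _ hεdet])
  subst hα
  simp only [transpose_mul, transpose_transpose, hskew, hεT, neg_mul, mul_neg, neg_neg,
    ← mul_assoc, mul_nonsing_inv _ hεdet, one_mul]
  simp only [mul_assoc, nonsing_inv_mul _ hεdet, mul_one]

/- The L2 operator norm makes `Matrix n n ℂ` a C⋆-algebra whose topology is the product topology,
so its `NormedSpace.exp` is the usual matrix exponential. -/
open scoped Matrix.Norms.L2Operator in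
lemma IsHermitian.transpose_eq_conj_of_mul_exp_eq {ε h : Matrix n n ℂ}
    (hε : ε ∈ unitaryGroup n ℂ) (hh : h.IsHermitian)
    (hspec : ∀ μ ∈ spectrum ℂ h, μ.re ∈ Set.Ioc (-Real.pi) Real.pi)
    (hcomm : ε * NormedSpace.exp (I • h) = (NormedSpace.exp (I • h))ᵀ * ε) :
    hᵀ = ε * h * ε⁻¹ := by
  have hεu : IsUnit ε := (Unitary.toUnits ⟨ε, hε⟩).isUnit
  have hεinv : ε⁻¹ = star ε := inv_eq_left_inv (mem_unitaryGroup_iff'.mp hε)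
  refine hh.transpose.isSelfAdjoint.eq_of_exp_I_smul_eq ?_ (finite_spectrum _) (finite_spectrum _)
    (by rwa [spectrum_transpose]) ?_ ?_
  · rw [hεinv]; exact hh.isSelfAdjoint.conjugate ε
  · rw [hεinv, Unitary.spectrum_star_right_conjugate (U := ⟨ε, hε⟩)]
    exact hspec
  · rw [← transpose_smul, exp_transpose, ← smul_mul_assoc, ← mul_smul_comm, exp_conj _ _ hεu,
      hcomm, mul_assoc, mul_nonsing_inv _ ((isUnit_iff_isUnit_det ε).mp hεu), mul_one]

lemma exp_half_I_smul_mem_unitaryGroup {h : Matrix n n ℂ} (hh : h.IsHermitian) :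
    NormedSpace.exp ((I / 2) • h) ∈ unitaryGroup n ℂ := by
  have hx : IsSelfAdjoint ((2⁻¹ : ℝ) • h) := (IsSelfAdjoint.all _).smul hh.isSelfAdjoint
  have : (I / 2) • h = I • ((2⁻¹ : ℝ) • h) := by
    rw [← Complex.coe_smul, smul_smul]
    norm_num [div_eq_mul_inv]
  rw [this]
  open scoped Matrix.Norms.L2Operator in
  exact (selfAdjoint.expUnitary ⟨_, hx⟩).2

lemma exp_I_smul_eq_inv_mul_transpose_mul_mul {ε h : Matrix n n ℂ} (hε : ε ∈ unitaryGroup n ℂ)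
    (hh : h.IsHermitian) (hspec : ∀ μ ∈ spectrum ℂ h, μ.re ∈ Set.Ioc (-Real.pi) Real.pi)
    (hcomm : ε * NormedSpace.exp (I • h) = (NormedSpace.exp (I • h))ᵀ * ε) :
    NormedSpace.exp (I • h) = ε⁻¹ * (NormedSpace.exp ((I / 2) • h))ᵀ * ε *
      NormedSpace.exp ((I / 2) • h) := by
  have hεu : IsUnit ε := (Unitary.toUnits ⟨ε, hε⟩).isUnit
  have hεdet : IsUnit ε.det := (isUnit_iff_isUnit_det ε).mp hεu
  rw [← exp_transpose, transpose_smul, hh.transpose_eq_conj_of_mul_exp_eq hε hspec hcomm,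
    ← smul_mul_assoc, ← mul_smul_comm, exp_conj _ _ hεu]
  simp only [← mul_assoc, nonsing_inv_mul _ hεdet, one_mul]
  rw [mul_assoc _ ε⁻¹ ε, nonsing_inv_mul _ hεdet, mul_one,
    ← Matrix.exp_add_of_commute _ _ (Commute.refl _), ← add_smul, add_halves]

end Matrix

/-- for `ε ∈ U(m)` skew-symmetric and `α ∈ U(m)`, there is `γ ∈ U(m)`
with `α = ε⁻¹·γᵀ·ε·γ` iff `ε·α = αᵀ·ε`; explicitly, writing `α = exp(i h)` with `h`
self-adjoint with spectrum in `(-π, π]`, one can take `γ = exp(i h / 2)`. -/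
theorem statement4 {m : ℕ} (ε α : Matrix (Fin m) (Fin m) ℂ)
    (hε : ε ∈ Matrix.unitaryGroup (Fin m) ℂ)
    (hskew : εᵀ = -ε)
    (hα : α ∈ Matrix.unitaryGroup (Fin m) ℂ) :
    ((∃ γ ∈ Matrix.unitaryGroup (Fin m) ℂ, α = ε⁻¹ * γᵀ * ε * γ) ↔
      ε * α = αᵀ * ε) ∧
    (∀ h : Matrix (Fin m) (Fin m) ℂ, h.IsHermitian →
      (∀ μ ∈ spectrum ℂ h, μ.re ∈ Set.Ioc (-Real.pi) Real.pi) →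
      α = NormedSpace.exp (Complex.I • h) →
      ε * α = αᵀ * ε →
      NormedSpace.exp ((Complex.I / 2) • h) ∈ Matrix.unitaryGroup (Fin m) ℂ ∧
      α = ε⁻¹ * (NormedSpace.exp ((Complex.I / 2) • h))ᵀ * ε *
            NormedSpace.exp ((Complex.I / 2) • h)) := by
  refine ⟨⟨fun ⟨γ, _, hγ⟩ ↦ mul_eq_transpose_mul_of_transpose_eq_neg
    (Unitary.toUnits ⟨ε, hε⟩).isUnit hskew hγ, fun hcomm ↦ ?_⟩, ?_⟩
  · open scoped Matrix.Norms.L2Operator in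
    obtain ⟨h, hh, hspec, rfl⟩ := Unitary.exists_isSelfAdjoint_log hα (finite_spectrum α)
    exact ⟨_, exp_half_I_smul_mem_unitaryGroup hh.isHermitian,
      exp_I_smul_eq_inv_mul_transpose_mul_mul hε hh.isHermitian hspec hcomm⟩
  · rintro h hh hspec rfl hcomm
    exact ⟨exp_half_I_smul_mem_unitaryGroup hh,
      exp_I_smul_eq_inv_mul_transpose_mul_mul hε hh hspec hcomm⟩
end

section
/- Let α : ℝ → U(m) be continuous, ℤ-periodic, and TRS, i.e., ε·α(k) = α(-k)ᵗ·ε for a fixed unitary skew-symmetric ε. Then the map k ↦ det α(k) is even: det α(-k) = det α(k) for all k. Consequently, the winding number (degree) of det α : ℝ/ℤ → U(1) is zero. -/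
open Matrix

lemma intConst {g : ℝ → ℝ} (hg : Continuous g) (h : ∀ x, ∃ n : ℤ, g x = n) :
    ∀ a b : ℝ, g a = g b := by
  have key : ∀ a b : ℝ, g a < g b → False := by
    intro a b hlt
    obtain ⟨na, ha⟩ := h a
    obtain ⟨nb, hb⟩ := h b
    have hna : na < nb := by
      rw [ha, hb] at hlt; exact_mod_cast hlt
    have hna' : (na : ℝ) + 1 ≤ (nb : ℝ) := by exact_mod_cast hna
    have hmem : (na : ℝ) + 1/2 ∈ Set.Icc (g a) (g b) := by
      constructor
      · rw [ha]; linarith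
      · rw [hb]; linarith
    obtain ⟨c, hc⟩ := intermediate_value_univ a b hg hmem
    obtain ⟨n, hn⟩ := h c
    have h1 : (2*n : ℝ) = 2*na + 1 := by rw [hn] at hc; push_cast; linarith
    have h2 : (2*n : ℤ) = 2*na + 1 := by exact_mod_cast h1
    omega
  intro a b
  rcases lt_trichotomy (g a) (g b) with hlt | heq | hgt
  · exact absurd hlt (fun hl => key a b hl)
  · exact heq
  · exact absurd hgt (fun hl => key b a hl)

/-- a continuous `ℤ`-periodic TRS family `α : ℝ → U(m)` has even
determinant, `det α(-k) = det α(k)`, and consequently the winding number (degree)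
of `det α : ℝ/ℤ → U(1)` vanishes (expressed via any continuous phase lift `φ`). -/
theorem statement6 {m : ℕ} (α : ℝ → Matrix (Fin m) (Fin m) ℂ)
    (ε : Matrix (Fin m) (Fin m) ℂ)
    (hcont : Continuous α)
    (hunit : ∀ k, α k ∈ Matrix.unitaryGroup (Fin m) ℂ)
    (hper : ∀ k, α (k + 1) = α k)
    (hε : ε ∈ Matrix.unitaryGroup (Fin m) ℂ)
    (hskew : εᵀ = -ε)
    (hTRS : ∀ k, ε * α k = (α (-k))ᵀ * ε) :
    (∀ k, (α (-k)).det = (α k).det) ∧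
    (∀ φ : ℝ → ℝ, Continuous φ →
      (∀ k, (α k).det = Complex.exp (2 * Real.pi * Complex.I * φ k)) →
      φ 1 - φ 0 = 0) := by
  have hdetε : ε.det ≠ 0 := by
    have h1 : ε * star ε = 1 := hε.2
    have := congrArg Matrix.det h1
    rw [Matrix.det_mul, Matrix.det_one] at this
    intro h0; rw [h0, zero_mul] at this; exact zero_ne_one this
  have heven : ∀ k, (α (-k)).det = (α k).det := by
    intro k
    have := congrArg Matrix.det (hTRS k)
    rw [Matrix.det_mul, Matrix.det_mul, Matrix.det_transpose] at this
    exact mul_right_cancel₀ hdetε (by linear_combination -this)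
  refine ⟨heven, ?_⟩
  intro φ hφc hφ
  have h2pi : (2 * Real.pi * Complex.I : ℂ) ≠ 0 := by
    exact mul_ne_zero (mul_ne_zero two_ne_zero (Complex.ofReal_ne_zero.2 Real.pi_ne_zero)) Complex.I_ne_zero
  -- given exp-equality deduce integer difference
  have hint : ∀ x y : ℝ, Complex.exp (2 * Real.pi * Complex.I * x) =
      Complex.exp (2 * Real.pi * Complex.I * y) → ∃ n : ℤ, x - y = n := by
    intro x y hxy
    rw [Complex.exp_eq_exp_iff_exists_int] at hxy
    obtain ⟨n, hn⟩ := hxy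
    refine ⟨n, ?_⟩
    have : (2 * Real.pi * Complex.I) * (x - y - n) = 0 := by ring_nf; linear_combination hn
    have h' : ((x : ℂ) - y - n) = 0 := by
      rcases mul_eq_zero.1 this with h | h
      · exact absurd h h2pi
      · exact h
    have : ((x - y - n : ℝ) : ℂ) = 0 := by push_cast [Complex.ofReal_sub]; linear_combination h'
    have := Complex.ofReal_eq_zero.1 this
    linarith
  -- evenness of φ
  have geven : ∀ k, φ (-k) = φ k := by
    have hgc : Continuous (fun k => φ (-k) - φ k) := by fun_prop
    have hgi : ∀ k, ∃ n : ℤ, (fun k => φ (-k) - φ k) k = n := by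
      intro k
      exact hint (φ (-k)) (φ k) (by rw [← hφ, ← hφ, heven])
    intro k
    have := intConst hgc hgi k 0
    simp at this
    linarith
  -- periodic increment
  have hstep : ∀ k, φ (k + 1) - φ k = φ 1 - φ 0 := by
    have hgc : Continuous (fun k : ℝ => φ (k + 1) - φ k) := by fun_prop
    have hgi : ∀ k, ∃ n : ℤ, (fun k : ℝ => φ (k + 1) - φ k) k = n := by
      intro k
      exact hint (φ (k + 1)) (φ k) (by rw [← hφ, ← hφ, hper])
    intro k
    have := intConst hgc hgi k 0
    simpa using this
  have h1 : φ 0 - φ (-1) = φ 1 - φ 0 := by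
    have := hstep (-1); simpa using this
  have h2 : φ (-1) = φ 1 := geven 1
  linarith
end

section
/- Let β : ℝ → U(m) be continuous, ℤ-periodic, and satisfy β(-k) = ε⁻¹·conj(β(k))·ε for a fixed unitary skew-symmetric ε. Then det β(0) = det β(1/2) = 1, and the degree of the map det β : ℝ/ℤ → U(1) is an even integer. -/
/-!
At `k = 0` and `k = 1/2` the symmetry reads `ε β = conj(β) ε`. For a unitary `A` with
`ε A = conj(A) ε` and `εᵀ = -ε`, the antiunitary map `v ↦ ε⁻¹ v̄ = star ε *ᵥ star v` sends a
unit eigenvector `v` of `A` with eigenvalue `μ` (so `|μ| = 1`) to a unit eigenvector orthogonal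
to `v` with eigenvalue `μ̄`. In an orthonormal basis starting with these two vectors, both `A`
and `ε` split off a `2 × 2` block on which `det A = μ μ̄ = 1`, and the complementary blocks are
a smaller instance of the same situation; so `det A = 1` by induction on the dimension.

For the degree write `det β(k) = exp(2πi φ(k))`. Since `det β(-k)` is the conjugate of
`det β(k)` and `β` is periodic, `φ(k) + φ(-k)` and `φ(k + 1) - φ(k)` are continuous and
integer-valued, hence constant. Comparing their values at `0` and `±1/2` gives
`φ(1) - φ(0) = 2 (φ(1/2) - φ(0))`, and `φ(0)`, `φ(1/2)` are integers because `det β = 1` there.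
-/

open Matrix Complex

theorem exists_int_eq_of_cexp_eq_one {x : ℝ} (h : cexp (2 * Real.pi * I * x) = 1) :
    ∃ z : ℤ, x = z := by
  obtain ⟨z, hz⟩ := Complex.exp_eq_one_iff.mp h
  refine ⟨z, ?_⟩
  have h2πI : 2 * (Real.pi : ℂ) * I ≠ 0 := by simp [Real.pi_ne_zero]
  exact_mod_cast mul_left_cancel₀ h2πI (hz.trans (mul_comm _ _))

theorem eq_of_continuous_of_cexp_eq_one {f : ℝ → ℝ} (hf : Continuous f)
    (h : ∀ x, cexp (2 * Real.pi * I * f x) = 1) (a b : ℝ) : f a = f b :=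
  isPreconnected_univ.constant_of_mapsTo
    Int.isClosedEmbedding_coe_real.isInducing.isDiscrete_range hf.continuousOn
    (fun x _ => (exists_int_eq_of_cexp_eq_one (h x)).imp fun _ => Eq.symm)
    (Set.mem_univ a) (Set.mem_univ b)

theorem cexp_two_pi_I_add (x y : ℝ) : cexp (2 * Real.pi * I * ↑(x + y)) =
    cexp (2 * Real.pi * I * x) * cexp (2 * Real.pi * I * y) := by
  rw [← Complex.exp_add]; push_cast; ring_nf

theorem conj_cexp_two_pi_I (x : ℝ) :
    starRingEnd ℂ (cexp (2 * Real.pi * I * x)) = cexp (2 * Real.pi * I * ↑(-x)) := by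
  rw [← Complex.exp_conj]; simp [map_ofNat]

theorem exists_int_sub_eq_two_mul_of_map_neg_eq_conj {d : ℝ → ℂ} (φ : ℝ → ℝ) (hφc : Continuous φ)
    (hφ : ∀ k, d k = cexp (2 * Real.pi * I * φ k))
    (hper : ∀ k, d (k + 1) = d k) (hsym : ∀ k, d (-k) = starRingEnd ℂ (d k))
    (h0 : d 0 = 1) (hhalf : d (1 / 2) = 1) :
    ∃ z : ℤ, φ 1 - φ 0 = 2 * z := by
  have hsum : φ (1 / 2) + φ (-(1 / 2)) = φ 0 + φ (-0) := by
    refine eq_of_continuous_of_cexp_eq_one (f := fun k => φ k + φ (-k))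
      (hφc.add (hφc.comp continuous_neg)) (fun k => ?_) _ _
    rw [cexp_two_pi_I_add, ← hφ, ← hφ, hsym, hφ, conj_cexp_two_pi_I, ← cexp_two_pi_I_add]
    simp
  have hdiff : φ (0 + 1) - φ 0 = φ (-(1 / 2) + 1) - φ (-(1 / 2)) := by
    refine eq_of_continuous_of_cexp_eq_one (f := fun k => φ (k + 1) - φ k)
      ((hφc.comp (continuous_add_const 1)).sub hφc) (fun k => ?_) _ _
    rw [sub_eq_add_neg, cexp_two_pi_I_add, ← hφ, hper, hφ, ← cexp_two_pi_I_add]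
    simp
  obtain ⟨z₀, hz₀⟩ := exists_int_eq_of_cexp_eq_one ((hφ 0).symm.trans h0)
  obtain ⟨z₁, hz₁⟩ := exists_int_eq_of_cexp_eq_one ((hφ (1 / 2)).symm.trans hhalf)
  refine ⟨z₁ - z₀, ?_⟩
  norm_num at hsum hdiff
  push_cast
  linarith

namespace Matrix

variable {n : Type*}

theorem map_starRingEnd_star (U : Matrix n n ℂ) : (star U).map (starRingEnd ℂ) = Uᵀ := by
  ext i j; simp [star_apply]

variable [Fintype n]

theorem toSquareBlockProp_mul_of_toBlock_eq_zero {R : Type*} [CommRing R] {M N : Matrix n n R}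
    (p : n → Prop) [DecidablePred p] (hN : N.toBlock p (fun i => ¬p i) = 0) :
    (M * N).toSquareBlockProp (fun i => ¬p i) =
      M.toSquareBlockProp (fun i => ¬p i) * N.toSquareBlockProp (fun i => ¬p i) := by
  rw [toSquareBlockProp, toBlock_mul_eq_add _ p, hN, Matrix.mul_zero, zero_add]
  rfl

theorem inner_toLp_toLp_eq_star_dotProduct (x y : n → ℂ) :
    inner ℂ (WithLp.toLp 2 x : EuclideanSpace ℂ n) (WithLp.toLp 2 y) = star x ⬝ᵥ y := by
  rw [EuclideanSpace.inner_toLp_toLp, dotProduct_comm]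

theorem exists_mulVec_eq_smul_of_star_dotProduct_self_eq_one [Nonempty n] (A : Matrix n n ℂ) :
    ∃ (μ : ℂ) (v : n → ℂ), star v ⬝ᵥ v = 1 ∧ A *ᵥ v = μ • v := by
  obtain ⟨μ, hμ⟩ := Module.End.exists_eigenvalue (mulVecLin A)
  obtain ⟨v, hv⟩ := hμ.exists_hasEigenvector
  set x : EuclideanSpace ℂ n := WithLp.toLp 2 v
  have hx : x ≠ 0 := by simpa [x] using hv.2
  refine ⟨μ, ((‖x‖⁻¹ : ℝ) : ℂ) • v, ?_, ?_⟩
  · have hnorm : star v ⬝ᵥ v = ((‖x‖ ^ 2 : ℝ) : ℂ) := by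
      rw [dotProduct_comm, ← EuclideanSpace.inner_toLp_toLp, inner_self_eq_norm_sq_to_K]
      push_cast; rfl
    have hx' : ‖x‖ ≠ 0 := norm_ne_zero_iff.mpr hx
    rw [star_smul, smul_dotProduct, dotProduct_smul, hnorm]
    simp only [Complex.star_def, Complex.conj_ofReal, smul_eq_mul]
    push_cast
    field_simp
    exact div_self (Complex.ofReal_ne_zero.mpr hx')
  · rw [mulVec_smul, ← mulVecLin_apply, hv.apply_eq_smul, smul_comm]

section SkewForm

variable {ε : Matrix n n ℂ}

theorem star_star_mulVec_star (hskew : εᵀ = -ε) (v : n → ℂ) :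
    star (star ε *ᵥ star v) = -(ε *ᵥ v) := by
  rw [star_mulVec, star_star, ← star_eq_conjTranspose, star_star, ← mulVec_transpose, hskew,
    neg_mulVec]

theorem mulVec_dotProduct_self_eq_zero (hskew : εᵀ = -ε) (x : n → ℂ) : (ε *ᵥ x) ⬝ᵥ x = 0 := by
  have h := dotProduct_comm (ε *ᵥ x) x
  rw [dotProduct_mulVec, ← mulVec_transpose, hskew, neg_mulVec, neg_dotProduct] at h
  exact CharZero.eq_neg_self_iff.mp h

end SkewForm

variable [DecidableEq n]

theorem apply_eq_of_mulVec_single {R : Type*} [CommRing R] {M : Matrix n n R} {j : n}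
    {v : n → R} (h : M *ᵥ Pi.single j 1 = v) (i : n) : M i j = v i := by
  rw [← h]; simp

theorem det_toSquareBlockProp_pair {R : Type*} [CommRing R] {A : Matrix n n R} {i₀ i₁ : n}
    (hne : i₀ ≠ i₁) {a b : R} (h₀ : A *ᵥ Pi.single i₀ 1 = a • Pi.single i₀ 1)
    (h₁ : A *ᵥ Pi.single i₁ 1 = b • Pi.single i₁ 1) :
    (A.toSquareBlockProp (fun i => i = i₀ ∨ i = i₁)).det = a * b := by
  have hdiag : A.toSquareBlockProp (fun i => i = i₀ ∨ i = i₁) =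
      diagonal fun i : {i // i = i₀ ∨ i = i₁} => A i i := by
    ext ⟨i, hi⟩ ⟨j, hj⟩
    by_cases hij : i = j
    · subst hij; simp [toSquareBlockProp_def]
    rcases hj with rfl | rfl <;>
      simp [toSquareBlockProp_def, apply_eq_of_mulVec_single h₀, apply_eq_of_mulVec_single h₁,
        hij]
  rw [hdiag, det_diagonal, ← Finset.prod_subtype {i₀, i₁} (by simp) fun i => A i i,
    Finset.prod_pair hne]
  simp [apply_eq_of_mulVec_single h₀, apply_eq_of_mulVec_single h₁]

theorem det_star_mul_mul_of_mem_unitaryGroup {U : Matrix n n ℂ} (hU : U ∈ unitaryGroup n ℂ)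
    (A : Matrix n n ℂ) : (star U * A * U).det = A.det := by
  rw [det_mul, det_mul, mul_right_comm, ← det_mul, mem_unitaryGroup_iff'.mp hU, det_one, one_mul]

theorem toSquareBlockProp_mem_unitaryGroup {U : Matrix n n ℂ} (hU : U ∈ unitaryGroup n ℂ)
    (p : n → Prop) [DecidablePred p] (h : U.toBlock p (fun i => ¬p i) = 0) :
    U.toSquareBlockProp (fun i => ¬p i) ∈ unitaryGroup {i // ¬p i} ℂ := by
  rw [mem_unitaryGroup_iff']
  change (star U).toSquareBlockProp _ * U.toSquareBlockProp _ = 1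
  rw [← toSquareBlockProp_mul_of_toBlock_eq_zero p h, mem_unitaryGroup_iff'.mp hU]
  exact toBlock_one_self _

theorem star_mul_self_eq_one_of_mulVec_eq_smul {A : Matrix n n ℂ} (hA : A ∈ unitaryGroup n ℂ)
    {μ : ℂ} {v : n → ℂ} (hv0 : v ≠ 0) (hv : A *ᵥ v = μ • v) : star μ * μ = 1 := by
  have h1 : star (A *ᵥ v) ⬝ᵥ (A *ᵥ v) = star v ⬝ᵥ v := by
    rw [star_mulVec, dotProduct_mulVec, vecMul_vecMul, ← star_eq_conjTranspose,
      mem_unitaryGroup_iff'.mp hA, vecMul_one]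
  rw [hv, star_smul, smul_dotProduct, dotProduct_smul, smul_smul, smul_eq_mul] at h1
  have hv0' : star v ⬝ᵥ v ≠ 0 := by
    open scoped ComplexOrder in exact dotProduct_star_self_eq_zero.not.mpr hv0
  exact mul_right_cancel₀ hv0' (h1.trans (one_mul _).symm)

theorem star_mulVec_eq_smul {A : Matrix n n ℂ} (hA : A ∈ unitaryGroup n ℂ)
    {μ : ℂ} {v : n → ℂ} (hv0 : v ≠ 0) (hv : A *ᵥ v = μ • v) : star A *ᵥ v = star μ • v := by
  have h1 : star A *ᵥ (A *ᵥ v) = v := by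
    rw [mulVec_mulVec, mem_unitaryGroup_iff'.mp hA, one_mulVec]
  rw [hv, mulVec_smul] at h1
  calc star A *ᵥ v = (star μ * μ) • (star A *ᵥ v) := by
        rw [star_mul_self_eq_one_of_mulVec_eq_smul hA hv0 hv, one_smul]
    _ = star μ • v := by rw [← smul_smul, h1]

theorem toBlock_pair_compl_eq_zero_of_mem_unitaryGroup {A : Matrix n n ℂ}
    (hA : A ∈ unitaryGroup n ℂ) {i₀ i₁ : n} {μ ν : ℂ}
    (h₀ : A *ᵥ Pi.single i₀ 1 = μ • Pi.single i₀ 1)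
    (h₁ : A *ᵥ Pi.single i₁ 1 = ν • Pi.single i₁ 1) :
    A.toBlock (fun i => i = i₀ ∨ i = i₁) (fun i => ¬(i = i₀ ∨ i = i₁)) = 0 := by
  have hs₀ := star_mulVec_eq_smul hA (by simp) h₀
  have hs₁ := star_mulVec_eq_smul hA (by simp) h₁
  ext ⟨i, hi⟩ ⟨j, hj⟩
  have hstar : A i j = star (star A j i) := by simp [star_apply]
  rw [not_or] at hj
  rcases hi with rfl | rfl <;>
    simp [hstar, apply_eq_of_mulVec_single hs₀, apply_eq_of_mulVec_single hs₁, hj.1, hj.2]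

theorem toBlock_pair_compl_eq_zero_of_transpose_eq_neg {ε : Matrix n n ℂ} (hskew : εᵀ = -ε)
    {i₀ i₁ : n} (hε₀ : ε *ᵥ Pi.single i₀ 1 = -Pi.single i₁ 1)
    (hε₁ : ε *ᵥ Pi.single i₁ 1 = Pi.single i₀ 1) :
    ε.toBlock (fun i => i = i₀ ∨ i = i₁) (fun i => ¬(i = i₀ ∨ i = i₁)) = 0 := by
  ext ⟨i, hi⟩ ⟨j, hj⟩
  have hji : ε i j = -ε j i := by simpa using congrFun (congrFun hskew j) i
  rw [not_or] at hj
  rcases hi with rfl | rfl <;>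
    simp [hji, apply_eq_of_mulVec_single hε₀, apply_eq_of_mulVec_single hε₁, hj.1, hj.2]

theorem mulVec_single_toMatrix (b : OrthonormalBasis n ℂ (EuclideanSpace ℂ n)) (j : n) :
    (EuclideanSpace.basisFun n ℂ).toBasis.toMatrix b *ᵥ Pi.single j 1 = (b j).ofLp := by
  ext i; simp [Module.Basis.toMatrix_apply]

theorem exists_mem_unitaryGroup_mulVec_single_eq {v w : n → ℂ} (hv : star v ⬝ᵥ v = 1)
    (hw : star w ⬝ᵥ w = 1) (hvw : star v ⬝ᵥ w = 0) :
    ∃ U ∈ unitaryGroup n ℂ, ∃ i₀ i₁ : n, i₀ ≠ i₁ ∧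
      U *ᵥ Pi.single i₀ 1 = v ∧ U *ᵥ Pi.single i₁ 1 = w := by
  have hwv : star w ⬝ᵥ v = 0 := by rw [star_dotProduct, hvw, star_zero]
  have hpair : Orthonormal ℂ ![WithLp.toLp 2 v, WithLp.toLp 2 w] := by
    simp only [orthonormal_iff_ite, Fin.forall_fin_two, cons_val_zero, cons_val_one,
      inner_toLp_toLp_eq_star_dotProduct, hv, hw, hvw, hwv]
    simp
  have hcard : 1 < Fintype.card n := by
    simpa [Nat.lt_iff_add_one_le] using hpair.linearIndependent.fintype_card_le_finrank
  obtain ⟨i₀, i₁, hne⟩ := Fintype.exists_pair_of_one_lt_card hcard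
  let f : n → EuclideanSpace ℂ n := fun i =>
    if i = i₀ then WithLp.toLp 2 v else WithLp.toLp 2 w
  have hf : Orthonormal ℂ (({i₀, i₁} : Set n).domRestrict f) := by
    rw [orthonormal_iff_ite]
    rintro ⟨i, hi | hi⟩ ⟨j, hj | hj⟩ <;> subst hi hj <;>
      simp only [Set.domRestrict_apply, f, if_pos, if_neg hne.symm,
        inner_toLp_toLp_eq_star_dotProduct] <;>
      simp [hv, hw, hvw, hwv, hne, hne.symm, Subtype.ext_iff]
  obtain ⟨b, hb⟩ := hf.exists_orthonormalBasis_extension_of_card_eq (by simp)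
  refine ⟨_, (EuclideanSpace.basisFun n ℂ).toMatrix_orthonormalBasis_mem_unitary b, i₀, i₁, hne,
    ?_, ?_⟩ <;> rw [mulVec_single_toMatrix, hb _ (by simp)] <;> simp [f, hne.symm]

section UnitaryForm

variable {ε : Matrix n n ℂ}

theorem mulVec_star_mulVec_star (hε : ε ∈ unitaryGroup n ℂ) (v : n → ℂ) :
    ε *ᵥ (star ε *ᵥ star v) = star v := by
  rw [mulVec_mulVec, mem_unitaryGroup_iff.mp hε, one_mulVec]

theorem star_dotProduct_star_mulVec_star (hε : ε ∈ unitaryGroup n ℂ) (hskew : εᵀ = -ε)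
    (v : n → ℂ) : star v ⬝ᵥ (star ε *ᵥ star v) = 0 := by
  calc star v ⬝ᵥ (star ε *ᵥ star v)
      = (ε *ᵥ (star ε *ᵥ star v)) ⬝ᵥ (star ε *ᵥ star v) := by rw [mulVec_star_mulVec_star hε]
    _ = 0 := mulVec_dotProduct_self_eq_zero hskew _

theorem star_dotProduct_self_star_mulVec_star (hε : ε ∈ unitaryGroup n ℂ) (hskew : εᵀ = -ε)
    (v : n → ℂ) : star (star ε *ᵥ star v) ⬝ᵥ (star ε *ᵥ star v) = star v ⬝ᵥ v := by
  rw [star_star_mulVec_star hskew, neg_dotProduct, dotProduct_comm, dotProduct_mulVec,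
    ← mulVec_transpose, hskew, neg_mulVec, mulVec_star_mulVec_star hε, neg_dotProduct, neg_neg]

end UnitaryForm

/-- For unitary `A`, `ε * A = conj A * ε` is equivalent to `Aᵀ * ε * A = ε`. -/
structure IsUnitarySymplectic (ε A : Matrix n n ℂ) : Prop where
  mem_unitaryGroup : A ∈ unitaryGroup n ℂ
  form_mem_unitaryGroup : ε ∈ unitaryGroup n ℂ
  form_transpose : εᵀ = -ε
  form_mul : ε * A = A.map (starRingEnd ℂ) * ε

theorem IsUnitarySymplectic.conj {ε A U : Matrix n n ℂ} (h : IsUnitarySymplectic ε A)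
    (hU : U ∈ unitaryGroup n ℂ) : IsUnitarySymplectic (Uᵀ * ε * U) (star U * A * U) where
  mem_unitaryGroup := mul_mem (mul_mem (Unitary.star_mem hU) h.mem_unitaryGroup) hU
  form_mem_unitaryGroup :=
    mul_mem (mul_mem (transpose_mem_unitaryGroup_iff.mpr hU) h.form_mem_unitaryGroup) hU
  form_transpose := by
    simp only [transpose_mul, transpose_transpose, h.form_transpose, Matrix.mul_neg,
      Matrix.neg_mul, Matrix.mul_assoc]
  form_mul := by
    have hUr : U * star U = 1 := mem_unitaryGroup_iff.mp hU
    have hUc : U.map (starRingEnd ℂ) * Uᵀ = 1 := by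
      rw [← map_starRingEnd_star, ← Matrix.map_mul, hUr,
        Matrix.map_one _ (map_zero _) (map_one _)]
    simp only [Matrix.map_mul, map_starRingEnd_star, Matrix.mul_assoc]
    rw [← Matrix.mul_assoc U, hUr, Matrix.one_mul, ← Matrix.mul_assoc (U.map _), hUc,
      Matrix.one_mul, ← Matrix.mul_assoc ε, h.form_mul, Matrix.mul_assoc]

theorem IsUnitarySymplectic.restrict {ε A : Matrix n n ℂ} (h : IsUnitarySymplectic ε A)
    (p : n → Prop) [DecidablePred p] (hA : A.toBlock p (fun i => ¬p i) = 0)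
    (hε : ε.toBlock p (fun i => ¬p i) = 0) :
    IsUnitarySymplectic (ε.toSquareBlockProp fun i => ¬p i)
      (A.toSquareBlockProp fun i => ¬p i) where
  mem_unitaryGroup := toSquareBlockProp_mem_unitaryGroup h.mem_unitaryGroup p hA
  form_mem_unitaryGroup := toSquareBlockProp_mem_unitaryGroup h.form_mem_unitaryGroup p hε
  form_transpose := by
    rw [toSquareBlockProp, toBlock, transpose_submatrix, h.form_transpose]; rfl
  form_mul := by
    rw [← toSquareBlockProp_mul_of_toBlock_eq_zero p hA, h.form_mul,
      toSquareBlockProp_mul_of_toBlock_eq_zero p hε]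
    rfl

theorem IsUnitarySymplectic.mulVec_star_mulVec_star_eq_star_smul {ε A : Matrix n n ℂ}
    (h : IsUnitarySymplectic ε A) {μ : ℂ} {v : n → ℂ} (hv : A *ᵥ v = μ • v) :
    A *ᵥ (star ε *ᵥ star v) = star μ • (star ε *ᵥ star v) := by
  have hεε : ε * star ε = 1 := mem_unitaryGroup_iff.mp h.form_mem_unitaryGroup
  have hinj : Function.Injective (ε *ᵥ ·) := by
    intro x y hxy
    simpa [mulVec_mulVec, mem_unitaryGroup_iff'.mp h.form_mem_unitaryGroup] using
      congrArg (star ε *ᵥ ·) hxy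
  have hconj : A.map (starRingEnd ℂ) *ᵥ star v = star (A *ᵥ v) := by
    rw [star_mulVec, ← mulVec_transpose]; rfl
  apply hinj
  calc ε *ᵥ (A *ᵥ (star ε *ᵥ star v))
      = A.map (starRingEnd ℂ) *ᵥ ((ε * star ε) *ᵥ star v) := by
        rw [mulVec_mulVec, h.form_mul, ← mulVec_mulVec, mulVec_mulVec _ ε]
    _ = ε *ᵥ (star μ • (star ε *ᵥ star v)) := by
        rw [hεε, one_mulVec, hconj, hv, star_smul, mulVec_smul, mulVec_mulVec, hεε, one_mulVec]

theorem IsUnitarySymplectic.mulVec_single_eq_star_smul {ε A : Matrix n n ℂ} {i₀ i₁ : n}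
    {μ : ℂ} (h : IsUnitarySymplectic ε A) (hA : A *ᵥ Pi.single i₀ 1 = μ • Pi.single i₀ 1)
    (hε₁ : ε *ᵥ Pi.single i₁ 1 = Pi.single i₀ 1) :
    A *ᵥ Pi.single i₁ 1 = star μ • Pi.single i₁ 1 := by
  have hsingle : star ε *ᵥ star (Pi.single i₀ (1 : ℂ)) = Pi.single i₁ 1 := by
    rw [Pi.star_single, star_one, ← hε₁, mulVec_mulVec,
      mem_unitaryGroup_iff'.mp h.form_mem_unitaryGroup, one_mulVec]
  rw [← hsingle, h.mulVec_star_mulVec_star_eq_star_smul hA]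

theorem IsUnitarySymplectic.exists_unitary_conj_standard_pair [Nonempty n] {ε A : Matrix n n ℂ}
    (h : IsUnitarySymplectic ε A) :
    ∃ U ∈ unitaryGroup n ℂ, ∃ (i₀ i₁ : n) (μ : ℂ), i₀ ≠ i₁ ∧
      (star U * A * U) *ᵥ Pi.single i₀ 1 = μ • Pi.single i₀ 1 ∧
      (Uᵀ * ε * U) *ᵥ Pi.single i₀ 1 = -Pi.single i₁ 1 ∧
      (Uᵀ * ε * U) *ᵥ Pi.single i₁ 1 = Pi.single i₀ 1 := by
  obtain ⟨μ, v, hv, hAv⟩ := exists_mulVec_eq_smul_of_star_dotProduct_self_eq_one A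
  obtain ⟨U, hU, i₀, i₁, hne, hU₀, hU₁⟩ := exists_mem_unitaryGroup_mulVec_single_eq hv
    ((star_dotProduct_self_star_mulVec_star h.form_mem_unitaryGroup h.form_transpose v).trans hv)
    (star_dotProduct_star_mulVec_star h.form_mem_unitaryGroup h.form_transpose v)
  have hinv : ∀ i, star U *ᵥ (U *ᵥ Pi.single i 1) = Pi.single i 1 := fun i => by
    rw [mulVec_mulVec, mem_unitaryGroup_iff'.mp hU, one_mulVec]
  have htranspose : ∀ x, Uᵀ *ᵥ star x = star (star U *ᵥ x) := fun x => by
    rw [star_mulVec, ← star_eq_conjTranspose, star_star, mulVec_transpose]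
  have hεv : ε *ᵥ v = -star (star ε *ᵥ star v) := by
    rw [star_star_mulVec_star h.form_transpose, neg_neg]
  refine ⟨U, hU, i₀, i₁, μ, hne, ?_, ?_, ?_⟩ <;> simp only [← mulVec_mulVec]
  · rw [hU₀, hAv, mulVec_smul, ← hU₀, hinv]
  · rw [hU₀, hεv, mulVec_neg, htranspose, ← hU₁, hinv, Pi.star_single, star_one]
  · rw [hU₁, mulVec_star_mulVec_star h.form_mem_unitaryGroup, htranspose, ← hU₀, hinv,
      Pi.star_single, star_one]

theorem IsUnitarySymplectic.det_eq_one {ε A : Matrix n n ℂ} (h : IsUnitarySymplectic ε A) :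
    A.det = 1 := by
  induction hN : Fintype.card n using Nat.strong_induction_on generalizing n with
  | _ N ih =>
  rcases isEmpty_or_nonempty n with hn | hn
  · exact det_isEmpty
  obtain ⟨U, hU, i₀, i₁, μ, hne, hA₀, hε₀, hε₁⟩ := h.exists_unitary_conj_standard_pair
  have hconj := h.conj hU
  have hA₁ := hconj.mulVec_single_eq_star_smul hA₀ hε₁
  have hAblock := toBlock_pair_compl_eq_zero_of_mem_unitaryGroup hconj.mem_unitaryGroup hA₀ hA₁
  have hεblock := toBlock_pair_compl_eq_zero_of_transpose_eq_neg hconj.form_transpose hε₀ hε₁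
  have hcard : Fintype.card {i // ¬(i = i₀ ∨ i = i₁)} < N :=
    hN ▸ Fintype.card_subtype_lt (x := i₀) (by simp)
  rw [← det_star_mul_mul_of_mem_unitaryGroup hU A,
    twoBlockTriangular_det' _ (fun i => i = i₀ ∨ i = i₁)
      fun i hi j hj => congrFun (congrFun hAblock ⟨i, hi⟩) ⟨j, hj⟩,
    det_toSquareBlockProp_pair hne hA₀ hA₁, mul_comm μ,
    star_mul_self_eq_one_of_mulVec_eq_smul hconj.mem_unitaryGroup (by simp) hA₀, one_mul]
  exact ih _ hcard (hconj.restrict _ hAblock hεblock) rfl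

end Matrix

theorem statement10_general {m : ℕ} (β : ℝ → Matrix (Fin m) (Fin m) ℂ)
    (ε : Matrix (Fin m) (Fin m) ℂ)
    (hunit : ∀ k, β k ∈ Matrix.unitaryGroup (Fin m) ℂ)
    (hper : ∀ k, β (k + 1) = β k)
    (hε : ε ∈ Matrix.unitaryGroup (Fin m) ℂ)
    (hskew : εᵀ = -ε)
    (hsym : ∀ k, β (-k) = ε⁻¹ * (β k).map (starRingEnd ℂ) * ε) :
    (β 0).det = 1 ∧ (β (1/2)).det = 1 ∧
    (∀ φ : ℝ → ℝ, Continuous φ →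
      (∀ k, (β k).det = Complex.exp (2 * Real.pi * Complex.I * φ k)) →
      ∃ z : ℤ, φ 1 - φ 0 = 2 * z) := by
  have hεinv : ε⁻¹ = star ε := inv_eq_left_inv (mem_unitaryGroup_iff'.mp hε)
  have hsymplectic : ∀ k, β (-k) = β k → IsUnitarySymplectic ε (β k) := fun k hk =>
    ⟨hunit k, hε, hskew, by
      conv_lhs => rw [← hk, hsym, hεinv, ← Matrix.mul_assoc, ← Matrix.mul_assoc,
        mem_unitaryGroup_iff.mp hε, Matrix.one_mul]⟩
  have hdet0 := (hsymplectic 0 (by rw [neg_zero])).det_eq_one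
  have hdethalf := (hsymplectic (1 / 2) (by rw [← hper]; norm_num)).det_eq_one
  refine ⟨hdet0, hdethalf, fun φ hφc hφ =>
    exists_int_sub_eq_two_mul_of_map_neg_eq_conj φ hφc hφ (fun k => by rw [hper]) (fun k => ?_)
      hdet0 hdethalf⟩
  rw [hsym, hεinv, det_star_mul_mul_of_mem_unitaryGroup hε, RingHom.map_det]
  rfl

/-- a continuous `ℤ`-periodic family `β : ℝ → U(m)` with
`β(-k) = ε⁻¹ conj(β(k)) ε` (`ε` unitary skew-symmetric) satisfies
`det β(0) = det β(1/2) = 1`, and the winding number of `det β` (expressed via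
any continuous phase lift `φ`) is even. -/
theorem statement10 {m : ℕ} (β : ℝ → Matrix (Fin m) (Fin m) ℂ)
    (ε : Matrix (Fin m) (Fin m) ℂ)
    (hcont : Continuous β)
    (hunit : ∀ k, β k ∈ Matrix.unitaryGroup (Fin m) ℂ)
    (hper : ∀ k, β (k + 1) = β k)
    (hε : ε ∈ Matrix.unitaryGroup (Fin m) ℂ)
    (hskew : εᵀ = -ε)
    (hsym : ∀ k, β (-k) = ε⁻¹ * (β k).map (starRingEnd ℂ) * ε) :
    (β 0).det = 1 ∧ (β (1/2)).det = 1 ∧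
    (∀ φ : ℝ → ℝ, Continuous φ →
      (∀ k, (β k).det = Complex.exp (2 * Real.pi * Complex.I * φ k)) →
      ∃ z : ℤ, φ 1 - φ 0 = 2 * z) :=
  statement10_general β ε hunit hper hε hskew hsym
end

section
/- Let P : ℝ → B(H) satisfy P(k)² = P(k) = P(k)*, be C¹, and be time-reversal symmetric: P(-k) = θ·P(k)·θ⁻¹ for an antiunitary θ with θ² = -1. Then the generator A(k) := i·[∂ₖP(k), P(k)] satisfies A(-k) = θ·A(k)·θ⁻¹, and consequently the parallel transport satisfies T(-k, -k') = θ·T(k, k')·θ⁻¹. -/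
/-!
The antiunitary `θ` is additive and isometric, hence a continuous real-linear map, so it commutes
with `d/dk`. Differentiating `θ P(k) = P(-k) θ` gives `θ P'(k) = -P'(-k) θ`; this sign cancels the
one from `θ i = -i θ`, which yields `θ A(k) = A(-k) θ`. Then `k ↦ θ T(k,k') x` and
`k ↦ T(-k,-k') θ x` solve the same linear ODE `y' = i A(-k) y` and agree at `k = k'`, so they
coincide by uniqueness of solutions with a continuous coefficient.
-/

open Set Complex

section LinearODE

variable {𝕜 E : Type*} [NontriviallyNormedField 𝕜] [NormedAddCommGroup E] [NormedSpace 𝕜 E]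
  [NormedSpace ℝ E]

theorem eq_of_hasDerivAt_clm_apply_of_continuous {B : ℝ → E →L[𝕜] E} (hB : Continuous B)
    {f g : ℝ → E} (hf : ∀ t, HasDerivAt f (B t (f t)) t) (hg : ∀ t, HasDerivAt g (B t (g t)) t)
    {t₀ : ℝ} (h₀ : f t₀ = g t₀) : f = g := by
  funext t
  obtain ⟨a, b, ht, ht₀⟩ : ∃ a b, t ∈ Ioo a b ∧ t₀ ∈ Ioo a b :=
    ⟨min t t₀ - 1, max t t₀ + 1, by grind, by grind⟩
  obtain ⟨C, hC⟩ := (isCompact_Icc (a := a) (b := b)).exists_bound_of_continuousOn hB.continuousOn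
  have hLip : ∀ s ∈ Ioo a b, LipschitzOnWith C.toNNReal (B s) univ := fun s hs =>
    ((B s).lipschitz.weaken
      (NNReal.le_toNNReal_of_coe_le (hC s (Ioo_subset_Icc_self hs)))).lipschitzOnWith
  exact ODE_solution_unique_of_mem_Ioo (v := fun s => B s) hLip ht₀ (fun s _ => ⟨hf s, trivial⟩)
    (fun s _ => ⟨hg s, trivial⟩) h₀ ht

end LinearODE

theorem HasDerivAt.clm_apply_const {E F : Type*} [NormedAddCommGroup E] [NormedSpace ℂ E]
    [NormedAddCommGroup F] [NormedSpace ℂ F] {c : ℝ → E →L[ℂ] F} {c' : E →L[ℂ] F} {t : ℝ}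
    (hc : HasDerivAt c c' t) (x : E) : HasDerivAt (fun s => c s x) (c' x) t :=
  ((ContinuousLinearMap.apply ℂ F x).restrictScalars ℝ).hasFDerivAt.comp_hasDerivAt t hc

section TimeReversal

variable {H : Type*} [NormedAddCommGroup H] [NormedSpace ℂ H] {Θ : H →L[ℝ] H}

theorem timeReversal_deriv {P P' : ℝ → H →L[ℂ] H} (hP : ∀ k, HasDerivAt P (P' k) k)
    (hPΘ : ∀ k x, Θ (P k x) = P (-k) (Θ x)) (k : ℝ) (x : H) :
    Θ (P' k x) = -P' (-k) (Θ x) := by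
  have h₁ : HasDerivAt (fun s => Θ (P s x)) (Θ (P' k x)) k :=
    Θ.hasFDerivAt.comp_hasDerivAt k ((hP k).clm_apply_const x)
  have h₂ : HasDerivAt (fun s => P (-s) (Θ x)) (-P' (-k) (Θ x)) k := by
    simpa [Function.comp_def] using ((hP (-k)).clm_apply_const (Θ x)).scomp k (hasDerivAt_neg k)
  simp only [hPΘ] at h₁
  exact h₁.unique h₂

theorem timeReversal_commutator (hΘ : ∀ (c : ℂ) x, Θ (c • x) = starRingEnd ℂ c • Θ x)
    {P P' : ℝ → H →L[ℂ] H} (hPΘ : ∀ k x, Θ (P k x) = P (-k) (Θ x))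
    (hP'Θ : ∀ k x, Θ (P' k x) = -P' (-k) (Θ x)) (k : ℝ) (x : H) :
    Θ ((I • ((P' k).comp (P k) - (P k).comp (P' k))) x) =
      (I • ((P' (-k)).comp (P (-k)) - (P (-k)).comp (P' (-k)))) (Θ x) := by
  simp only [smul_apply, sub_apply, ContinuousLinearMap.comp_apply, hΘ, conj_I, map_sub, map_neg,
    hP'Θ, hPΘ, neg_smul, ← smul_neg]
  congr 1
  abel

theorem timeReversal_transport (hΘ : ∀ (c : ℂ) x, Θ (c • x) = starRingEnd ℂ c • Θ x)
    {A : ℝ → H →L[ℂ] H} (hA : Continuous A) (hAΘ : ∀ k x, Θ (A k x) = A (-k) (Θ x))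
    {T : ℝ → ℝ → H →L[ℂ] H}
    (hT : ∀ k' k, HasDerivAt (fun s => T s k') ((-I) • (A k).comp (T k k')) k)
    (hT₀ : ∀ k', T k' k' = 1) (k k' : ℝ) (x : H) :
    Θ (T k k' x) = T (-k) (-k') (Θ x) := by
  set B : ℝ → H →L[ℂ] H := fun s => I • A (-s)
  have hf : ∀ s, HasDerivAt (fun s => Θ (T s k' x)) (B s (Θ (T s k' x))) s := fun s => by
    simpa [B, hΘ, hAΘ, Function.comp_def] using
      Θ.hasFDerivAt.comp_hasDerivAt s ((hT k' s).clm_apply_const x)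
  have hg : ∀ s, HasDerivAt (fun s => T (-s) (-k') (Θ x)) (B s (T (-s) (-k') (Θ x))) s :=
    fun s => by
      simpa [B, Function.comp_def] using
        ((hT (-k') (-s)).clm_apply_const (Θ x)).scomp s (hasDerivAt_neg s)
  have h₀ : Θ (T k' k' x) = T (-k') (-k') (Θ x) := by simp [hT₀]
  exact congrFun (eq_of_hasDerivAt_clm_apply_of_continuous (by fun_prop) hf hg h₀) k

end TimeReversal

theorem statement13_general {H : Type*} [NormedAddCommGroup H] [InnerProductSpace ℂ H]
    (θ : H → H)
    (hadd : ∀ x y, θ (x + y) = θ x + θ y)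
    (hsmul : ∀ (c : ℂ) (x : H), θ (c • x) = (starRingEnd ℂ c) • θ x)
    (hinner : ∀ x y, (inner ℂ (θ x) (θ y) : ℂ) = inner ℂ y x)
    (P P' : ℝ → H →L[ℂ] H)
    (hderiv : ∀ k, HasDerivAt P (P' k) k)
    (hcont : Continuous P')
    (hPTRS : ∀ k x, θ (P k x) = P (-k) (θ x))
    (A : ℝ → H →L[ℂ] H)
    (hA : ∀ k, A k = Complex.I • ((P' k).comp (P k) - (P k).comp (P' k)))
    (T : ℝ → ℝ → H →L[ℂ] H)
    (hT : ∀ k' k, HasDerivAt (fun s => T s k')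
      ((-Complex.I) • ((A k).comp (T k k'))) k)
    (hT0 : ∀ k', T k' k' = 1) :
    (∀ k x, θ (A k x) = A (-k) (θ x)) ∧
    (∀ k k' x, θ (T k k' x) = T (-k) (-k') (θ x)) := by
  have hnorm : ∀ x, ‖θ x‖ = ‖x‖ := fun x => by
    rw [norm_eq_sqrt_re_inner (𝕜 := ℂ), hinner, ← norm_eq_sqrt_re_inner]
  let Θ : H →L[ℝ] H := (AddMonoidHom.mk' θ hadd).toRealLinearMap
    (AddMonoidHomClass.isometry_of_norm (AddMonoidHom.mk' θ hadd) hnorm).continuous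
  have hAΘ : ∀ k x, θ (A k x) = A (-k) (θ x) := fun k x => by
    rw [hA, hA]
    exact timeReversal_commutator (Θ := Θ) hsmul hPTRS (timeReversal_deriv hderiv hPTRS) k x
  have hPc : Continuous P := continuous_iff_continuousAt.2 fun k => (hderiv k).continuousAt
  have hAc : Continuous A := by rw [funext hA]; fun_prop
  exact ⟨hAΘ, timeReversal_transport (Θ := Θ) hsmul hAc hAΘ hT hT0⟩

/-- for a `C¹` TRS family of orthogonal projectors,
`P(-k) = θ P(k) θ⁻¹` with `θ` antiunitary, `θ² = -1`, the generator
`A(k) = i [∂ₖP(k), P(k)]` satisfies `A(-k) = θ A(k) θ⁻¹`, and consequently the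
parallel transport satisfies `T(-k,-k') = θ T(k,k') θ⁻¹`. -/
theorem statement13 {H : Type*} [NormedAddCommGroup H] [InnerProductSpace ℂ H]
    [CompleteSpace H]
    (θ : H → H)
    (hadd : ∀ x y, θ (x + y) = θ x + θ y)
    (hsmul : ∀ (c : ℂ) (x : H), θ (c • x) = (starRingEnd ℂ c) • θ x)
    (hsurj : Function.Surjective θ)
    (hinner : ∀ x y, (inner ℂ (θ x) (θ y) : ℂ) = inner ℂ y x)
    (hsq : ∀ x, θ (θ x) = -x)
    (P P' : ℝ → H →L[ℂ] H)
    (hproj : ∀ k, (P k).comp (P k) = P k)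
    (hsa : ∀ k, ContinuousLinearMap.adjoint (P k) = P k)
    (hderiv : ∀ k, HasDerivAt P (P' k) k)
    (hcont : Continuous P')
    (hPTRS : ∀ k x, θ (P k x) = P (-k) (θ x))
    (A : ℝ → H →L[ℂ] H)
    (hA : ∀ k, A k = Complex.I • ((P' k).comp (P k) - (P k).comp (P' k)))
    (T : ℝ → ℝ → H →L[ℂ] H)
    (hT : ∀ k' k, HasDerivAt (fun s => T s k')
      ((-Complex.I) • ((A k).comp (T k k'))) k)
    (hT0 : ∀ k', T k' k' = 1) :
    (∀ k x, θ (A k x) = A (-k) (θ x)) ∧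
    (∀ k k' x, θ (T k k' x) = T (-k) (-k') (θ x)) :=
  statement13_general θ hadd hsmul hinner P P' hderiv hcont hPTRS A hA T hT hT0
end

section
/- Let P : ℝ² → B(H) be a C² family of orthogonal projectors, T_{k₂}(k₁, 0) the parallel transport in the k₁-direction at fixed k₂, and G(k₁,k₂) := [∂_{k₁}P(k₁,k₂), P(k₁,k₂)]. Then ∂_{k₂} T_{k₂}(k₁,0) = T_{k₂}(k₁,0) · ∫₀^{k₁} T_{k₂}(s,0)* · ∂_{k₂}G(s,k₂) · T_{k₂}(s,0) ds. -/
/-!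
The candidate derivative `Z(s) = T_b(s) ∫₀ˢ T_b(u)* ∂₂G(u,b) T_b(u) du` solves the variational
equation `Z' = G Z + ∂₂G T_b`, `Z(0) = 0`, because `T_b T_b* = 1`: the generator `G = [∂₁P, P]`
is skew-adjoint, so `T_b T_b* - 1` solves a homogeneous linear equation with zero initial value.
The remainder `E(s) = T_t(s) - T_b(s) - (t - b) Z(s)` then solves a linear equation whose
inhomogeneity is `o(t - b)` uniformly for `s` between `0` and `k₁`, and Grönwall's inequality
gives `E(k₁) = o(t - b)`.
-/

open Filter Topology Set Function Metric

lemma gronwallBound_δ0_eq_mul (K ε x : ℝ) :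
    gronwallBound 0 K ε x = ε * gronwallBound 0 K 1 x := by
  unfold gronwallBound; split_ifs <;> ring

section Gronwall

variable {E : Type*} [NormedAddCommGroup E] [NormedSpace ℝ E] {f f' : ℝ → E} {K ε a : ℝ}

lemma norm_le_gronwallBound_of_hasDerivAt_of_nonneg (ha : 0 ≤ a)
    (hf : ∀ t, HasDerivAt f (f' t) t) (h0 : f 0 = 0)
    (bound : ∀ t ∈ Icc 0 a, ‖f' t‖ ≤ K * ‖f t‖ + ε) :
    ‖f a‖ ≤ gronwallBound 0 K ε a := by
  simpa using norm_le_gronwallBound_of_norm_deriv_right_le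
    (fun t _ => (hf t).continuousAt.continuousWithinAt) (fun t _ => (hf t).hasDerivWithinAt)
    (by simp [h0]) (fun t ht => bound t (Ico_subset_Icc_self ht)) a ⟨ha, le_rfl⟩

lemma norm_le_gronwallBound_of_hasDerivAt (hf : ∀ t, HasDerivAt f (f' t) t) (h0 : f 0 = 0)
    (bound : ∀ t ∈ uIcc 0 a, ‖f' t‖ ≤ K * ‖f t‖ + ε) :
    ‖f a‖ ≤ gronwallBound 0 K ε |a| := by
  rcases le_total 0 a with ha | ha
  · rw [abs_of_nonneg ha]
    exact norm_le_gronwallBound_of_hasDerivAt_of_nonneg ha hf h0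
      (fun t ht => bound t (Icc_subset_uIcc ht))
  · rw [abs_of_nonpos ha]
    have hf_neg : ∀ t, HasDerivAt (fun u => f (-u)) ((-1 : ℝ) • f' (-t)) t := fun t =>
      (hf (-t)).scomp t (hasDerivAt_neg t)
    simpa using norm_le_gronwallBound_of_hasDerivAt_of_nonneg (neg_nonneg.2 ha) hf_neg
      (by simpa using h0) fun t ht => by
        simpa using bound (-t) (Icc_subset_uIcc' ⟨by linarith [ht.2], by linarith [ht.1]⟩)

end Gronwall

section UniformInParameter

variable {E : Type*} [NormedAddCommGroup E] {S : Set ℝ}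

lemma IsCompact.eventually_forall_norm_sub_lt {f : ℝ → ℝ → E} (hS : IsCompact S)
    (hf : Continuous (uncurry f)) (t₀ : ℝ) {c : ℝ} (hc : 0 < c) :
    ∀ᶠ t in 𝓝 t₀, ∀ s ∈ S, ‖f s t - f s t₀‖ < c := by
  obtain ⟨v, hv, hvS⟩ := hS.mem_uniformity_of_prod (f := fun t s => f s t) (s := univ)
    (hf.comp continuous_swap).continuousOn (mem_univ t₀) (dist_mem_uniformity hc)
  rw [nhdsWithin_univ] at hv
  filter_upwards [hv] with t ht s hs
  simpa [dist_eq_norm] using hvS t ht s hs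

lemma IsCompact.eventually_forall_norm_sub_sub_smul_le [NormedSpace ℝ E] {f f₂ : ℝ → ℝ → E}
    (hS : IsCompact S) (hf : ∀ s t, HasDerivAt (f s) (f₂ s t) t) (hf₂ : Continuous (uncurry f₂))
    (t₀ : ℝ) {c : ℝ} (hc : 0 < c) :
    ∀ᶠ t in 𝓝 t₀, ∀ s ∈ S, ‖f s t - f s t₀ - (t - t₀) • f₂ s t₀‖ ≤ c * |t - t₀| := by
  obtain ⟨δ, hδ, hball⟩ := eventually_nhds_iff_ball.1 (hS.eventually_forall_norm_sub_lt hf₂ t₀ hc)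
  filter_upwards [ball_mem_nhds t₀ hδ] with t ht s hs
  have hderiv : ∀ u ∈ ball t₀ δ, HasDerivWithinAt (fun u => f s u - (u - t₀) • f₂ s t₀)
      (f₂ s u - f₂ s t₀) (ball t₀ δ) u := fun u _ => by
    have : HasDerivAt (fun u => f s u - (u - t₀) • f₂ s t₀) (f₂ s u - (1 : ℝ) • f₂ s t₀) u :=
      (hf s u).sub (((hasDerivAt_id u).sub_const t₀).smul_const (f₂ s t₀))
    simpa using this.hasDerivWithinAt
  simpa [Real.norm_eq_abs, sub_right_comm] using
    (convex_ball t₀ δ).norm_image_sub_le_of_norm_hasDerivWithin_le hderiv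
      (fun u hu => (hball u hu s hs).le) (mem_ball_self hδ) ht

end UniformInParameter

section JointContinuity

variable {E : Type*} [NormedAddCommGroup E] [NormedSpace ℝ E]

lemma continuous_uncurry_of_continuous_of_hasDerivAt {f f₂ : ℝ → ℝ → E}
    (hf₁ : ∀ y, Continuous (f · y)) (hf₂ : ∀ x y, HasDerivAt (f x) (f₂ x y) y)
    (hf₂c : Continuous (uncurry f₂)) : Continuous (uncurry f) := by
  refine continuous_iff_continuousAt.2 fun ⟨x₀, y₀⟩ => ?_
  obtain ⟨C, hC⟩ := (isCompact_Icc.prod isCompact_Icc).exists_bound_of_continuousOn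
    (s := Icc (x₀ - 1) (x₀ + 1) ×ˢ Icc (y₀ - 1) (y₀ + 1)) hf₂c.continuousOn
  have hlip : ∀ x ∈ Icc (x₀ - 1) (x₀ + 1),
      LipschitzOnWith C.toNNReal (fun y => uncurry f (x, y)) (Icc (y₀ - 1) (y₀ + 1)) :=
    fun x hx => (convex_Icc _ _).lipschitzOnWith_of_nnnorm_hasDerivWithin_le
      (fun y _ => (hf₂ x y).hasDerivWithinAt) fun y hy => by
        rw [← NNReal.coe_le_coe, coe_nnnorm, Real.coe_toNNReal']
        exact (hC (x, y) ⟨hx, hy⟩).trans (le_max_left _ _)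
  exact (continuousOn_prod_of_continuousOn_lipschitzOnWith' (uncurry f) C.toNNReal hlip
    fun y _ => (hf₁ y).continuousOn).continuousAt
    (prod_mem_nhds (Icc_mem_nhds (by linarith) (by linarith))
      (Icc_mem_nhds (by linarith) (by linarith)))

end JointContinuity

section ParametricLinearODE

variable {R : Type*} [NormedRing R] [NormedAlgebra ℝ R] {A A₂ T : ℝ → ℝ → R} {Z : ℝ → R} {b : ℝ}

lemma hasDerivAt_sub_sub_smul_of_linearODE (hT : ∀ t s, HasDerivAt (T t) (A s t * T t s) s)
    (hZ : ∀ s, HasDerivAt Z (A s b * Z s + A₂ s b * T b s) s) (t s : ℝ) :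
    HasDerivAt (fun s => T t s - T b s - (t - b) • Z s)
      (A s t * (T t s - T b s - (t - b) • Z s) +
        ((A s t - A s b - (t - b) • A₂ s b) * T b s + (t - b) • ((A s t - A s b) * Z s))) s := by
  refine (((hT t s).sub (hT b s)).sub ((hZ s).const_smul (t - b))).congr_deriv ?_
  simp only [mul_sub, sub_mul, smul_add, smul_sub, mul_smul_comm, smul_mul_assoc]
  abel

theorem hasDerivAt_param_of_linearODE (hA : Continuous (uncurry A))
    (hA₂ : Continuous (uncurry A₂)) (hAd : ∀ s t, HasDerivAt (A s) (A₂ s t) t)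
    (hT : ∀ t s, HasDerivAt (T t) (A s t * T t s) s) (hT0 : ∀ t, T t 0 = 1)
    (hZ : ∀ s, HasDerivAt Z (A s b * Z s + A₂ s b * T b s) s) (hZ0 : Z 0 = 0) (a : ℝ) :
    HasDerivAt (fun t => T t a) (Z a) b := by
  have hS : IsCompact (uIcc 0 a) := isCompact_uIcc
  obtain ⟨CT, hCT⟩ := hS.exists_bound_of_continuousOn
    (continuous_iff_continuousAt.2 fun s => (hT b s).continuousAt).continuousOn
  obtain ⟨CZ, hCZ⟩ := hS.exists_bound_of_continuousOn
    (continuous_iff_continuousAt.2 fun s => (hZ s).continuousAt).continuousOn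
  obtain ⟨M, hM⟩ := (hS.prod (isCompact_closedBall b 1)).exists_bound_of_continuousOn
    hA.continuousOn
  have hCT0 : 0 ≤ CT := (norm_nonneg _).trans (hCT 0 left_mem_uIcc)
  have hCZ0 : 0 ≤ CZ := (norm_nonneg _).trans (hCZ 0 left_mem_uIcc)
  have hM0 : 0 ≤ M :=
    (norm_nonneg _).trans (hM (0, b) ⟨left_mem_uIcc, mem_closedBall_self zero_le_one⟩)
  set C := gronwallBound 0 M 1 |a|
  have hC : 0 ≤ C := by
    simpa [gronwallBound_x0] using gronwallBound_mono le_rfl zero_le_one hM0 (abs_nonneg a)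
  rw [hasDerivAt_iff_isLittleO, Asymptotics.isLittleO_iff]
  intro c hc
  set η := c / ((CT + CZ) * C + 1)
  have hη : 0 < η := by positivity
  filter_upwards [hS.eventually_forall_norm_sub_sub_smul_le hAd hA₂ b hη,
    hS.eventually_forall_norm_sub_lt hA b hη, closedBall_mem_nhds b one_pos] with t hρ hΔ ht
  have hforcing : ∀ s ∈ uIcc 0 a,
      ‖A s t * (T t s - T b s - (t - b) • Z s) +
        ((A s t - A s b - (t - b) • A₂ s b) * T b s + (t - b) • ((A s t - A s b) * Z s))‖ ≤
      M * ‖T t s - T b s - (t - b) • Z s‖ + η * (CT + CZ) * |t - b| := by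
    intro s hs
    calc _ ≤ ‖A s t‖ * ‖T t s - T b s - (t - b) • Z s‖ +
          (‖A s t - A s b - (t - b) • A₂ s b‖ * ‖T b s‖ + |t - b| * (‖A s t - A s b‖ * ‖Z s‖)) :=
          (norm_add_le _ _).trans (add_le_add (norm_mul_le _ _) ((norm_add_le _ _).trans
            (add_le_add (norm_mul_le _ _) (by
              rw [norm_smul, Real.norm_eq_abs]; gcongr; exact norm_mul_le _ _))))
      _ ≤ M * ‖T t s - T b s - (t - b) • Z s‖ + (η * |t - b| * CT + |t - b| * (η * CZ)) := by
          gcongr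
          exacts [hM (s, t) ⟨hs, ht⟩, hρ s hs, hCT s hs, (hΔ s hs).le, hCZ s hs]
      _ = _ := by ring
  have hgronwall := norm_le_gronwallBound_of_hasDerivAt
    (hasDerivAt_sub_sub_smul_of_linearODE hT hZ t) (by simp [hT0, hZ0]) hforcing
  rw [gronwallBound_δ0_eq_mul] at hgronwall
  have hηC : η * ((CT + CZ) * C) ≤ c := by
    rw [div_mul_eq_mul_div, div_le_iff₀ (by positivity)]
    nlinarith [mul_nonneg (add_nonneg hCT0 hCZ0) hC]
  calc _ ≤ η * (CT + CZ) * |t - b| * C := hgronwall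
    _ = η * ((CT + CZ) * C) * |t - b| := by ring
    _ ≤ c * ‖t - b‖ := by rw [Real.norm_eq_abs]; gcongr

end ParametricLinearODE

section Unitary

variable {R : Type*} [NormedRing R] [NormedAlgebra ℝ R] [StarRing R] [ContinuousStar R]
  {A U : ℝ → R}

lemma mul_star_self_eq_one_of_hasDerivAt [StarModule ℝ R] (hA : Continuous A)
    (hskew : ∀ s, star (A s) = -A s) (hU : ∀ s, HasDerivAt U (A s * U s) s) (hU0 : U 0 = 1)
    (a : ℝ) : U a * star (U a) = 1 := by
  obtain ⟨M, hM⟩ :=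
    (isCompact_uIcc (a := 0) (b := a)).exists_bound_of_continuousOn hA.continuousOn
  have hderiv : ∀ s, HasDerivAt (fun s => U s * star (U s) - 1)
      (A s * (U s * star (U s) - 1) - (U s * star (U s) - 1) * A s) s := fun s => by
    refine (((hU s).mul (hU s).star).sub_const 1).congr_deriv ?_
    rw [star_mul, hskew]
    noncomm_ring
  have hbound : ∀ s ∈ uIcc 0 a, ‖A s * (U s * star (U s) - 1) - (U s * star (U s) - 1) * A s‖ ≤
      2 * M * ‖U s * star (U s) - 1‖ + 0 := fun s hs => by
    refine (norm_sub_le _ _).trans ((add_le_add (norm_mul_le _ _) (norm_mul_le _ _)).trans ?_)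
    nlinarith [hM s hs, norm_nonneg (U s * star (U s) - 1)]
  have hnorm := norm_le_gronwallBound_of_hasDerivAt hderiv (by simp [hU0]) hbound
  rw [gronwallBound_ε0_δ0] at hnorm
  exact sub_eq_zero.1 (norm_le_zero_iff.1 hnorm)

lemma hasDerivAt_mul_integral_star [CompleteSpace R] {B : ℝ → R} (hB : Continuous B)
    (hU : ∀ s, HasDerivAt U (A s * U s) s) (hUU : ∀ s, U s * star (U s) = 1) (s : ℝ) :
    HasDerivAt (fun s => U s * ∫ u in (0 : ℝ)..s, star (U u) * (B u * U u))
      (A s * (U s * ∫ u in (0 : ℝ)..s, star (U u) * (B u * U u)) + B s * U s) s := by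
  have hUc : Continuous U := continuous_iff_continuousAt.2 fun s => (hU s).continuousAt
  refine ((hU s).mul ((hUc.star.mul (hB.mul hUc)).integral_hasStrictDerivAt 0 s).hasDerivAt)
    |>.congr_deriv ?_
  simp only [Pi.mul_apply]
  rw [← mul_assoc (U s) (star (U s)), hUU, one_mul, mul_assoc]

end Unitary

lemma HasDerivAt.isSelfAdjoint {F : Type*} [NormedAddCommGroup F] [NormedSpace ℝ F]
    [StarAddMonoid F] [StarModule ℝ F] [ContinuousStar F] {f : ℝ → F} {f' : F} {x : ℝ}
    (hf : HasDerivAt f f' x) (h : ∀ t, IsSelfAdjoint (f t)) : IsSelfAdjoint f' := by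
  have hstar := hf.star
  rw [show (fun t => star (f t)) = f from funext fun t => (h t).star_eq] at hstar
  exact hstar.unique hf

theorem statement14_general {H : Type*} [NormedAddCommGroup H] [InnerProductSpace ℂ H]
    [CompleteSpace H]
    (P D1 D2 D12 : ℝ → ℝ → H →L[ℂ] H)
    (hsa : ∀ k₁ k₂, ContinuousLinearMap.adjoint (P k₁ k₂) = P k₁ k₂)
    (hD1 : ∀ k₁ k₂, HasDerivAt (fun t => P t k₂) (D1 k₁ k₂) k₁)
    (hD2 : ∀ k₁ k₂, HasDerivAt (fun t => P k₁ t) (D2 k₁ k₂) k₂)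
    (hD12 : ∀ k₁ k₂, HasDerivAt (fun t => D1 k₁ t) (D12 k₁ k₂) k₂)
    (hc1 : Continuous (fun p : ℝ × ℝ => D1 p.1 p.2))
    (hc2 : Continuous (fun p : ℝ × ℝ => D2 p.1 p.2))
    (hc12 : Continuous (fun p : ℝ × ℝ => D12 p.1 p.2))
    (G : ℝ → ℝ → H →L[ℂ] H)
    (hG : ∀ k₁ k₂, G k₁ k₂ =
      (D1 k₁ k₂).comp (P k₁ k₂) - (P k₁ k₂).comp (D1 k₁ k₂))
    (T : ℝ → ℝ → H →L[ℂ] H)  -- `T k₂ k₁` is `T_{k₂}(k₁, 0)`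
    (hT : ∀ k₂ k₁, HasDerivAt (fun s => T k₂ s) ((G k₁ k₂).comp (T k₂ k₁)) k₁)
    (hT0 : ∀ k₂, T k₂ 0 = 1) :
    ∀ k₂ k₁, HasDerivAt (fun t => T t k₁)
      ((T k₂ k₁).comp (∫ s in (0:ℝ)..k₁,
        (ContinuousLinearMap.adjoint (T k₂ s)).comp
          ((((D12 s k₂).comp (P s k₂) - (P s k₂).comp (D12 s k₂)) +
            ((D1 s k₂).comp (D2 s k₂) - (D2 s k₂).comp (D1 s k₂))).comp
            (T k₂ s)))) k₂ := by
  intro b a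
  have hG' : G = fun s t => D1 s t * P s t - P s t * D1 s t := funext₂ hG
  set G₂ : ℝ → ℝ → H →L[ℂ] H := fun s t => (D12 s t * P s t - P s t * D12 s t) +
    (D1 s t * D2 s t - D2 s t * D1 s t)
  have hP : Continuous (uncurry P) := continuous_uncurry_of_continuous_of_hasDerivAt
    (fun t => continuous_iff_continuousAt.2 fun s => (hD1 s t).continuousAt) hD2 hc2
  have hGc : Continuous (uncurry G) := by
    rw [hG']; exact (hc1.mul hP).sub (hP.mul hc1)
  have hG₂c : Continuous (uncurry G₂) :=
    ((hc12.mul hP).sub (hP.mul hc12)).add ((hc1.mul hc2).sub (hc2.mul hc1))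
  have hGd : ∀ s t, HasDerivAt (G s) (G₂ s t) t := fun s t => by
    rw [hG']
    refine (((hD12 s t).mul (hD2 s t)).sub ((hD2 s t).mul (hD12 s t))).congr_deriv ?_
    simp only [G₂]
    abel
  have hskew : ∀ s, star (G s b) = -G s b := fun s => by
    have hPsa : IsSelfAdjoint (P s b) := hsa s b
    have hD1sa : IsSelfAdjoint (D1 s b) := (hD1 s b).isSelfAdjoint fun u => hsa u b
    rw [hG', star_sub, star_mul, star_mul, hPsa.star_eq, hD1sa.star_eq, neg_sub]
  have hUU := mul_star_self_eq_one_of_hasDerivAt (hGc.comp (.prodMk_left b)) hskew (hT b) (hT0 b)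
  exact hasDerivAt_param_of_linearODE hGc hG₂c hGd hT hT0
    (hasDerivAt_mul_integral_star (hG₂c.comp (.prodMk_left b)) (hT b) hUU) (by simp) a

/-- for a `C²` two-parameter family of orthogonal projectors, the
parallel transport `T_{k₂}(k₁,0)` in the `k₁`-direction, generated by
`G(k₁,k₂) = [∂₁P, P]`, is differentiable in `k₂` with
`∂₂ T_{k₂}(k₁,0) = T_{k₂}(k₁,0) ∫₀^{k₁} T_{k₂}(s,0)* (∂₂G)(s,k₂) T_{k₂}(s,0) ds`,
where `∂₂G = [∂₁₂P, P] + [∂₁P, ∂₂P]`. -/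
theorem statement14 {H : Type*} [NormedAddCommGroup H] [InnerProductSpace ℂ H]
    [CompleteSpace H]
    (P D1 D2 D12 : ℝ → ℝ → H →L[ℂ] H)
    (hproj : ∀ k₁ k₂, (P k₁ k₂).comp (P k₁ k₂) = P k₁ k₂)
    (hsa : ∀ k₁ k₂, ContinuousLinearMap.adjoint (P k₁ k₂) = P k₁ k₂)
    (hD1 : ∀ k₁ k₂, HasDerivAt (fun t => P t k₂) (D1 k₁ k₂) k₁)
    (hD2 : ∀ k₁ k₂, HasDerivAt (fun t => P k₁ t) (D2 k₁ k₂) k₂)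
    (hD12 : ∀ k₁ k₂, HasDerivAt (fun t => D1 k₁ t) (D12 k₁ k₂) k₂)
    (hc1 : Continuous (fun p : ℝ × ℝ => D1 p.1 p.2))
    (hc2 : Continuous (fun p : ℝ × ℝ => D2 p.1 p.2))
    (hc12 : Continuous (fun p : ℝ × ℝ => D12 p.1 p.2))
    (G : ℝ → ℝ → H →L[ℂ] H)
    (hG : ∀ k₁ k₂, G k₁ k₂ =
      (D1 k₁ k₂).comp (P k₁ k₂) - (P k₁ k₂).comp (D1 k₁ k₂))
    (T : ℝ → ℝ → H →L[ℂ] H)  -- `T k₂ k₁` is `T_{k₂}(k₁, 0)`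
    (hT : ∀ k₂ k₁, HasDerivAt (fun s => T k₂ s) ((G k₁ k₂).comp (T k₂ k₁)) k₁)
    (hT0 : ∀ k₂, T k₂ 0 = 1) :
    ∀ k₂ k₁, HasDerivAt (fun t => T t k₁)
      ((T k₂ k₁).comp (∫ s in (0:ℝ)..k₁,
        (ContinuousLinearMap.adjoint (T k₂ s)).comp
          ((((D12 s k₂).comp (P s k₂) - (P s k₂).comp (D12 s k₂)) +
            ((D1 s k₂).comp (D2 s k₂) - (D2 s k₂).comp (D1 s k₂))).comp
            (T k₂ s)))) k₂ :=
  statement14_general P D1 D2 D12 hsa hD1 hD2 hD12 hc1 hc2 hc12 G hG T hT hT0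
end

section
/- Let Ξ : ℝ → H^m be a C¹ orthonormal frame (each Ξ_a(k) a unit vector, mutually orthogonal) satisfying the time-reversal symmetry Ξ_b(-k) = Σ_a [θΞ_a(k)]·ε_{ab} with θ antiunitary, θ² = -1, ε unitary. Define ω(k) := Σ_{a=1}^m ⟨Ξ_a(k), ∂ₖΞ_a(k)⟩. Then ω is an even function: ω(-k) = ω(k) for all k ∈ ℝ. -/
/-!
Differentiating the time-reversal relation `Ξ(-k) = T Ξ(k)`, with `T x := (Σ_a ε_{ab} θ x_a)_b`
real-linear, gives `Ξ'(-k) = -T Ξ'(k)`. Since `θ` is antiunitary and `ε` unitary,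
`Σ_b ⟪(Tx)_b, (Ty)_b⟫ = Σ_a ⟪y_a, x_a⟫`, hence `ω(-k) = -Σ_a ⟪Ξ'_a(k), Ξ_a(k)⟫`. Differentiating
`⟪Ξ_a, Ξ_a⟫ = 1` shows `⟪Ξ'_a, Ξ_a⟫ = -⟪Ξ_a, Ξ'_a⟫`, which turns this into `ω(k)`.
-/

open scoped InnerProductSpace

section Antiunitary

variable {H : Type*} [NormedAddCommGroup H] [InnerProductSpace ℂ H] {θ : H → H}

theorem norm_map_of_inner_map_map (hinner : ∀ x y, ⟪θ x, θ y⟫_ℂ = ⟪y, x⟫_ℂ) (x : H) :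
    ‖θ x‖ = ‖x‖ := by
  rw [norm_eq_sqrt_re_inner (𝕜 := ℂ), norm_eq_sqrt_re_inner (𝕜 := ℂ) x, hinner]

noncomputable def realCLMOfAntiunitary (hadd : ∀ x y, θ (x + y) = θ x + θ y)
    (hsmul : ∀ (c : ℂ) (x : H), θ (c • x) = (starRingEnd ℂ c) • θ x)
    (hinner : ∀ x y, ⟪θ x, θ y⟫_ℂ = ⟪y, x⟫_ℂ) : H →L[ℝ] H :=
  LinearMap.mkContinuous
    { toFun := θ
      map_add' := hadd
      map_smul' := fun c x => by simpa [Complex.coe_smul] using hsmul c x }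
    1 (fun x => by simp [norm_map_of_inner_map_map hinner])

theorem HasDerivAt.antiunitary_comp (hadd : ∀ x y, θ (x + y) = θ x + θ y)
    (hsmul : ∀ (c : ℂ) (x : H), θ (c • x) = (starRingEnd ℂ c) • θ x)
    (hinner : ∀ x y, ⟪θ x, θ y⟫_ℂ = ⟪y, x⟫_ℂ) {f : ℝ → H} {f' : H} {k : ℝ}
    (hf : HasDerivAt f f' k) : HasDerivAt (fun t => θ (f t)) (θ f') k :=
  (realCLMOfAntiunitary hadd hsmul hinner).hasFDerivAt.comp_hasDerivAt k hf

end Antiunitary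

theorem inner_deriv_eq_neg_of_inner_self_const {𝕜 E : Type*} [RCLike 𝕜] [NormedAddCommGroup E]
    [InnerProductSpace 𝕜 E] [NormedSpace ℝ E] {f : ℝ → E} {f' : E} {k : ℝ} {c : 𝕜}
    (hconst : ∀ t, ⟪f t, f t⟫_𝕜 = c) (hf : HasDerivAt f f' k) :
    ⟪f', f k⟫_𝕜 = -⟪f k, f'⟫_𝕜 := by
  have hzero : HasDerivAt (fun t => ⟪f t, f t⟫_𝕜) 0 k := by
    simpa only [hconst] using hasDerivAt_const k c
  linear_combination -hzero.unique (hf.inner 𝕜 hf)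

theorem eq_neg_of_hasDerivAt_comp_neg {E : Type*} [NormedAddCommGroup E] [NormedSpace ℝ E]
    {f g : ℝ → E} {f' g' : E} {k : ℝ} (hfg : ∀ t, f (-t) = g t)
    (hf : HasDerivAt f f' (-k)) (hg : HasDerivAt g g' k) : f' = -g' := by
  have hrefl : HasDerivAt g (-f') k := by
    rw [← funext hfg]
    simpa [Function.comp_def] using hf.scomp k (hasDerivAt_neg k)
  exact neg_eq_iff_eq_neg.mp (hrefl.unique hg)

section TimeReversal

variable {H ι : Type*} [NormedAddCommGroup H] [InnerProductSpace ℂ H] [Fintype ι]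
  {θ : H → H} {ε : Matrix ι ι ℂ}

/-- The time-reversal symmetry of a frame `Ξ` reads `Ξ(-k) = timeReversal θ ε Ξ(k)`. -/
noncomputable def timeReversal (θ : H → H) (ε : Matrix ι ι ℂ) (x : ι → H) : ι → H :=
  fun b => ∑ a, ε a b • θ (x a)

theorem sum_inner_timeReversal [DecidableEq ι] (hinner : ∀ x y, ⟪θ x, θ y⟫_ℂ = ⟪y, x⟫_ℂ)
    (hε : ε ∈ Matrix.unitaryGroup ι ℂ) (x y : ι → H) :
    ∑ b, ⟪timeReversal θ ε x b, timeReversal θ ε y b⟫_ℂ = ∑ a, ⟪y a, x a⟫_ℂ := by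
  have hunit : ∀ c a, ∑ b, ε c b * starRingEnd ℂ (ε a b) = if c = a then 1 else 0 := by
    intro c a
    simpa [Matrix.mul_apply, Matrix.one_apply] using
      congrFun (congrFun (Matrix.mem_unitaryGroup_iff.mp hε) c) a
  calc ∑ b, ⟪timeReversal θ ε x b, timeReversal θ ε y b⟫_ℂ
      = ∑ a, ∑ c, (∑ b, ε a b * starRingEnd ℂ (ε c b)) * ⟪y a, x c⟫_ℂ := by
        simp only [timeReversal, sum_inner, inner_sum, inner_smul_left, inner_smul_right, hinner,
          Finset.sum_mul, Finset.mul_sum]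
        rw [Finset.sum_comm]
        refine Finset.sum_congr rfl fun a _ => ?_
        rw [Finset.sum_comm]
        refine Finset.sum_congr rfl fun c _ => Finset.sum_congr rfl fun b _ => ?_
        ring
    _ = ∑ a, ⟪y a, x a⟫_ℂ := by simp [hunit]

theorem hasDerivAt_timeReversal (hadd : ∀ x y, θ (x + y) = θ x + θ y)
    (hsmul : ∀ (c : ℂ) (x : H), θ (c • x) = (starRingEnd ℂ c) • θ x)
    (hinner : ∀ x y, ⟪θ x, θ y⟫_ℂ = ⟪y, x⟫_ℂ) {f : ι → ℝ → H} {f' : ι → H} {k : ℝ}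
    (hf : ∀ a, HasDerivAt (f a) (f' a) k) (b : ι) :
    HasDerivAt (fun t => timeReversal θ ε (fun a => f a t) b) (timeReversal θ ε f' b) k :=
  HasDerivAt.fun_sum fun a _ => ((hf a).antiunitary_comp hadd hsmul hinner).const_smul (ε a b)

end TimeReversal

theorem statement16_general {H : Type*} [NormedAddCommGroup H] [InnerProductSpace ℂ H]
    {m : ℕ}
    (θ : H → H)
    (hadd : ∀ x y, θ (x + y) = θ x + θ y)
    (hsmul : ∀ (c : ℂ) (x : H), θ (c • x) = (starRingEnd ℂ c) • θ x)
    (hinner : ∀ x y, inner ℂ (θ x) (θ y) = inner ℂ y x)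
    (ε : Matrix (Fin m) (Fin m) ℂ)
    (hε : ε ∈ Matrix.unitaryGroup (Fin m) ℂ)
    (Ξ Ξ' : Fin m → ℝ → H)
    (hortho : ∀ (k : ℝ) (a b : Fin m),
      inner ℂ (Ξ a k) (Ξ b k) = if a = b then 1 else 0)
    (hderiv : ∀ a k, HasDerivAt (Ξ a) (Ξ' a k) k)
    (hTRS : ∀ (k : ℝ) (b : Fin m), Ξ b (-k) = ∑ a, ε a b • θ (Ξ a k)) :
    ∀ k : ℝ, ∑ a, inner ℂ (Ξ a (-k)) (Ξ' a (-k)) =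
      ∑ a, inner ℂ (Ξ a k) (Ξ' a k) := by
  intro k
  have hskew : ∀ a, ⟪Ξ' a k, Ξ a k⟫_ℂ = -⟪Ξ a k, Ξ' a k⟫_ℂ := fun a =>
    inner_deriv_eq_neg_of_inner_self_const (fun t => (hortho t a a).trans (if_pos rfl))
      (hderiv a k)
  have hderiv_reflected : ∀ b, Ξ' b (-k) = -timeReversal θ ε (Ξ' · k) b := fun b =>
    eq_neg_of_hasDerivAt_comp_neg (fun t => hTRS t b) (hderiv b (-k))
      (hasDerivAt_timeReversal hadd hsmul hinner (fun a => hderiv a k) b)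
  calc ∑ a, ⟪Ξ a (-k), Ξ' a (-k)⟫_ℂ
      = -∑ b, ⟪timeReversal θ ε (Ξ · k) b, timeReversal θ ε (Ξ' · k) b⟫_ℂ := by
        simp only [hTRS k, hderiv_reflected, inner_neg_right, Finset.sum_neg_distrib]
        rfl
    _ = -∑ a, ⟪Ξ' a k, Ξ a k⟫_ℂ := by rw [sum_inner_timeReversal hinner hε]
    _ = ∑ a, ⟪Ξ a k, Ξ' a k⟫_ℂ := by simp [hskew]

/-- for a `C¹` orthonormal frame `Ξ` satisfying the time-reversal
symmetry `Ξ_b(-k) = Σ_a [θ Ξ_a(k)] ε_{ab}` with `θ` antiunitary, `θ² = -1`, and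
`ε` unitary, the function `ω(k) = Σ_a ⟪Ξ_a(k), ∂ₖΞ_a(k)⟫` is even. -/
theorem statement16 {H : Type*} [NormedAddCommGroup H] [InnerProductSpace ℂ H]
    {m : ℕ}
    (θ : H → H)
    (hadd : ∀ x y, θ (x + y) = θ x + θ y)
    (hsmul : ∀ (c : ℂ) (x : H), θ (c • x) = (starRingEnd ℂ c) • θ x)
    (hsurj : Function.Surjective θ)
    (hinner : ∀ x y, inner ℂ (θ x) (θ y) = inner ℂ y x)
    (hsq : ∀ x, θ (θ x) = -x)
    (ε : Matrix (Fin m) (Fin m) ℂ)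
    (hε : ε ∈ Matrix.unitaryGroup (Fin m) ℂ)
    (Ξ Ξ' : Fin m → ℝ → H)
    (hortho : ∀ (k : ℝ) (a b : Fin m),
      inner ℂ (Ξ a k) (Ξ b k) = if a = b then 1 else 0)
    (hderiv : ∀ a k, HasDerivAt (Ξ a) (Ξ' a k) k)
    (hTRS : ∀ (k : ℝ) (b : Fin m), Ξ b (-k) = ∑ a, ε a b • θ (Ξ a k)) :
    ∀ k : ℝ, ∑ a, inner ℂ (Ξ a (-k)) (Ξ' a (-k)) =
      ∑ a, inner ℂ (Ξ a k) (Ξ' a k) :=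
  statement16_general θ hadd hsmul hinner ε hε Ξ Ξ' hortho hderiv hTRS
end

section
/- Let ε be a unitary skew-symmetric m×m matrix and let Θ := ε·C be the associated antiunitary operator on ℂ^m (C = complex conjugation), so Θ² = -1. Let Π be an orthogonal projector on ℂ^m commuting with Θ (equivalently ε·Π = Πᵗ·ε), with dim Ran Π = 2r. Then Π decomposes as an orthogonal direct sum Π = ⊕_{j=1}^r P_j of rank-2 orthogonal projectors P_j, each commuting with Θ (i.e., ε·P_j = P_jᵗ·ε). -/
/-!
Pick a unit vector `v` in the range of `Π` and let `Q = v v*`. The map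
`Q ↦ εᴴ Qᵀ ε` fixes `Π`, is multiplicative up to order and preserves traces, so
`P₀ = Q + εᴴ Qᵀ ε` is a trace-two matrix below `Π` satisfying `ε P₀ = P₀ᵀ ε`. It is a
projector because the two summands are orthogonal: their product contains the scalar
`v* εᴴ v̄`, a value of the skew form `εᴴ`, hence zero. Then `Π - P₀` is again such a
projector, of rank `2r - 2`, and we induct on `r`.
-/

open Matrix

theorem IsSelfAdjoint.mul_eq_self_of_mul_eq_self {R : Type*} [Mul R] [StarMul R] {p q : R}
    (hp : IsSelfAdjoint p) (hq : IsSelfAdjoint q) (h : q * p = p) : p * q = p := by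
  simpa [hp.star_eq, hq.star_eq] using congr(star $h)

theorem pairwise_mul_eq_zero_vecCons {R : Type*} [NonUnitalSemiring R] {k : ℕ} {a : R}
    {f : Fin k → R} (hf : ∀ i, IsIdempotentElem (f i)) (horth : Pairwise fun i j ↦ f i * f j = 0)
    (ha : a * ∑ i, f i = 0) (ha' : (∑ i, f i) * a = 0) :
    Pairwise fun i j ↦ vecCons a f i * vecCons a f j = 0 := by
  have hsum_mul : ∀ i, (∑ j, f j) * f i = f i := fun i ↦ by
    rw [Finset.sum_mul, Finset.sum_eq_single i (fun j _ hj ↦ horth hj) (by simp), (hf i).eq]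
  have hmul_sum : ∀ i, f i * ∑ j, f j = f i := fun i ↦ by
    rw [Finset.mul_sum, Finset.sum_eq_single i (fun j _ hj ↦ horth hj.symm) (by simp), (hf i).eq]
  intro i j hij
  induction i using Fin.cases <;> induction j using Fin.cases
  · exact absurd rfl hij
  · rw [cons_val_zero, cons_val_succ, ← hsum_mul, ← mul_assoc, ha, zero_mul]
  · rw [cons_val_zero, cons_val_succ, ← hmul_sum, mul_assoc, ha', mul_zero]
  · rw [cons_val_succ, cons_val_succ]
    exact horth (ne_of_apply_ne Fin.succ hij)

namespace Matrix

variable {n : Type*} [Fintype n]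

theorem dotProduct_mulVec_self_eq_zero {R : Type*} [CommRing R] [IsAddTorsionFree R]
    {A : Matrix n n R} (hA : Aᵀ = -A) (x : n → R) : x ⬝ᵥ A *ᵥ x = 0 := by
  refine self_eq_neg.mp ?_
  conv_lhs => rw [dotProduct_mulVec, ← mulVec_transpose, hA, dotProduct_comm]
  rw [neg_mulVec, dotProduct_neg]

section StarRing

variable {R : Type*} [CommRing R] [StarRing R]

theorem isStarProjection_vecMulVec_star {v : n → R} (hv : star v ⬝ᵥ v = 1) :
    IsStarProjection (vecMulVec v (star v)) where
  isIdempotentElem := by rw [IsIdempotentElem, vecMulVec_mul_vecMulVec, hv, one_smul]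
  isSelfAdjoint := by
    rw [IsSelfAdjoint, star_eq_conjTranspose, conjTranspose_vecMulVec, star_star]

theorem trace_vecMulVec_star {v : n → R} (hv : star v ⬝ᵥ v = 1) :
    (vecMulVec v (star v)).trace = 1 := by
  rw [trace_vecMulVec, dotProduct_comm, hv]

omit [Fintype n] in
theorem conjTranspose_transpose_eq_neg {ε : Matrix n n R} (hskew : εᵀ = -ε) : εᴴᵀ = -εᴴ := by
  rw [conjTranspose_transpose, ← transpose_conjTranspose, hskew, conjTranspose_neg]

/-- On hermitian matrices this is conjugation by the antiunitary `εᴴ C`, `C` being complex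
conjugation; the hypothesis `ε * Pi = Piᵀ * ε` says that `Pi` is a fixed point. -/
def antiConj (ε Q : Matrix n n R) : Matrix n n R := εᴴ * Qᵀ * ε

variable {ε : Matrix n n R}

theorem conjTranspose_antiConj (Q : Matrix n n R) : (antiConj ε Q)ᴴ = antiConj ε Qᴴ := by
  simp only [antiConj, conjTranspose_mul, conjTranspose_conjTranspose, transpose_conjTranspose,
    conjTranspose_transpose, Matrix.mul_assoc]

theorem vecMulVec_mul_antiConj_vecMulVec [IsAddTorsionFree R] (hskew : εᵀ = -ε) (v : n → R) :
    vecMulVec v (star v) * antiConj ε (vecMulVec v (star v)) = 0 := by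
  rw [antiConj, transpose_vecMulVec, ← Matrix.mul_assoc, ← Matrix.mul_assoc, vecMulVec_mul,
    vecMulVec_mul_vecMulVec, ← dotProduct_mulVec,
    dotProduct_mulVec_self_eq_zero (conjTranspose_transpose_eq_neg hskew), zero_smul,
    vecMulVec_zero, Matrix.zero_mul]

section Unitary

variable [DecidableEq n] (hε : ε ∈ unitaryGroup n R)
include hε

theorem antiConj_mul_antiConj (Q Q' : Matrix n n R) :
    antiConj ε Q * antiConj ε Q' = antiConj ε (Q' * Q) := by
  have hε_mul_star : ε * εᴴ = 1 := hε.2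
  simp only [antiConj, transpose_mul, Matrix.mul_assoc]
  rw [← Matrix.mul_assoc ε, hε_mul_star, Matrix.one_mul]

theorem trace_antiConj (Q : Matrix n n R) : (antiConj ε Q).trace = Q.trace := by
  have hε_mul_star : ε * εᴴ = 1 := hε.2
  rw [antiConj, trace_mul_comm, ← Matrix.mul_assoc, hε_mul_star, Matrix.one_mul, trace_transpose]

theorem antiConj_eq_self {P : Matrix n n R} (hP : ε * P = Pᵀ * ε) : antiConj ε P = P := by
  have hε_star_mul : εᴴ * ε = 1 := hε.1
  rw [antiConj, Matrix.mul_assoc, ← hP, ← Matrix.mul_assoc, hε_star_mul, Matrix.one_mul]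

theorem isStarProjection_antiConj {Q : Matrix n n R} (hQ : IsStarProjection Q) :
    IsStarProjection (antiConj ε Q) where
  isIdempotentElem := by
    rw [IsIdempotentElem, antiConj_mul_antiConj hε, hQ.isIdempotentElem.eq]
  isSelfAdjoint := by
    rw [IsSelfAdjoint, star_eq_conjTranspose, conjTranspose_antiConj, ← star_eq_conjTranspose,
      hQ.isSelfAdjoint.star_eq]

theorem mul_antiConj (Q : Matrix n n R) : ε * antiConj ε Q = Qᵀ * ε := by
  have hε_mul_star : ε * εᴴ = 1 := hε.2
  rw [antiConj, ← Matrix.mul_assoc, ← Matrix.mul_assoc, hε_mul_star, Matrix.one_mul]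

theorem transpose_antiConj_mul (hskew : εᵀ = -ε) (Q : Matrix n n R) :
    (antiConj ε Q)ᵀ * ε = ε * Q := by
  have hε_star_mul : εᴴ * ε = 1 := hε.1
  simp [antiConj, Matrix.mul_assoc, hε_star_mul, conjTranspose_transpose_eq_neg hskew, hskew]

theorem mul_add_antiConj (hskew : εᵀ = -ε) (Q : Matrix n n R) :
    ε * (Q + antiConj ε Q) = (Q + antiConj ε Q)ᵀ * ε := by
  rw [Matrix.mul_add, transpose_add, Matrix.add_mul, mul_antiConj hε,
    transpose_antiConj_mul hε hskew, add_comm]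

theorem isStarProjection_add_antiConj [IsAddTorsionFree R] (hskew : εᵀ = -ε) {v : n → R}
    (hv : star v ⬝ᵥ v = 1) :
    IsStarProjection (vecMulVec v (star v) + antiConj ε (vecMulVec v (star v))) :=
  (isStarProjection_vecMulVec_star hv).add
    (isStarProjection_antiConj hε (isStarProjection_vecMulVec_star hv))
    (vecMulVec_mul_antiConj_vecMulVec hskew v)

end Unitary

end StarRing

section Field

variable {m K : Type*} [Field K]

theorem eq_zero_of_rank_eq_zero {A : Matrix m n K} (h : A.rank = 0) : A = 0 := by
  rw [rank, Submodule.finrank_eq_zero, LinearMap.range_eq_bot] at h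
  exact ext_iff_mulVec.mpr fun v ↦ by simpa using LinearMap.congr_fun h v

variable [DecidableEq n]

theorem rank_eq_trace_of_isIdempotentElem {A : Matrix n n K} (hA : IsIdempotentElem A) :
    (A.rank : K) = A.trace := by
  have h : IsIdempotentElem A.toLin' := hA.map toLinAlgEquiv'
  rw [← trace_toLin'_eq, (LinearMap.IsIdempotentElem.isProj_range _ h).trace]
  rfl

theorem rank_sub_add_rank_of_isIdempotentElem [CharZero K] {A B : Matrix n n K}
    (hA : IsIdempotentElem A) (hB : IsIdempotentElem B) (hAB : IsIdempotentElem (A - B)) :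
    (A - B).rank + B.rank = A.rank := by
  have h : ((A - B).rank + B.rank : K) = A.rank := by
    rw [rank_eq_trace_of_isIdempotentElem hA, rank_eq_trace_of_isIdempotentElem hB,
      rank_eq_trace_of_isIdempotentElem hAB, trace_sub, sub_add_cancel]
  exact_mod_cast h

end Field

section RCLike

open scoped ComplexOrder

variable {𝕜 : Type*} [RCLike 𝕜]

theorem exists_mulVec_eq_self_and_star_dotProduct_eq_one {P : Matrix n n 𝕜}
    (hP : IsIdempotentElem P) (hP0 : P ≠ 0) : ∃ v, P *ᵥ v = v ∧ star v ⬝ᵥ v = 1 := by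
  obtain ⟨x, hx⟩ : ∃ x, P *ᵥ x ≠ 0 := by
    by_contra! h
    exact hP0 (ext_iff_mulVec.mpr fun x ↦ by simpa using h x)
  have hPx : P *ᵥ (P *ᵥ x) = P *ᵥ x := by rw [mulVec_mulVec, hP.eq]
  obtain ⟨t, ht, hts⟩ := RCLike.pos_iff_exists_ofReal.mp (dotProduct_star_self_pos_iff.mpr hx)
  refine ⟨((√t)⁻¹ : 𝕜) • P *ᵥ x, by rw [mulVec_smul, hPx], ?_⟩
  have hsqrt : (√t : 𝕜) ^ 2 = t := by rw [← RCLike.ofReal_pow, Real.sq_sqrt ht.le]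
  rw [star_smul, smul_dotProduct, dotProduct_smul, ← hts, smul_eq_mul, smul_eq_mul,
    RCLike.star_def, map_inv₀, RCLike.conj_ofReal]
  field_simp
  exact hsqrt.symm

variable [DecidableEq n]

theorem exists_rank_two_subprojection {ε Pi : Matrix n n 𝕜} (hε : ε ∈ unitaryGroup n 𝕜)
    (hskew : εᵀ = -ε) (hPi : IsStarProjection Pi) (hcomm : ε * Pi = Piᵀ * ε) (hPi0 : Pi ≠ 0) :
    ∃ P, IsStarProjection P ∧ ε * P = Pᵀ * ε ∧ P.rank = 2 ∧ Pi * P = P := by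
  obtain ⟨v, hPiv, hv⟩ := exists_mulVec_eq_self_and_star_dotProduct_eq_one hPi.isIdempotentElem hPi0
  set Q := vecMulVec v (star v)
  have hPiQ : Pi * Q = Q := by rw [mul_vecMulVec, hPiv]
  have hQPi : Q * Pi = Q :=
    (isStarProjection_vecMulVec_star hv).isSelfAdjoint.mul_eq_self_of_mul_eq_self
      hPi.isSelfAdjoint hPiQ
  have hP := isStarProjection_add_antiConj hε hskew hv
  refine ⟨Q + antiConj ε Q, hP, mul_add_antiConj hε hskew Q, ?_, ?_⟩
  · have h := rank_eq_trace_of_isIdempotentElem hP.isIdempotentElem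
    rw [trace_add, trace_antiConj hε, trace_vecMulVec_star hv, one_add_one_eq_two] at h
    exact_mod_cast h
  · have hPiQ' : Pi * antiConj ε Q = antiConj ε Q := by
      rw [← antiConj_eq_self hε hcomm, antiConj_mul_antiConj hε, hQPi]
    rw [Matrix.mul_add, hPiQ, hPiQ']

end RCLike

end Matrix

/-- an orthogonal projector `Pi` on `ℂ^m` of rank `2r` commuting with
the antiunitary `Θ = ε C` (equivalently `ε Pi = Piᵀ ε`, `ε` unitary skew-symmetric)
decomposes as an orthogonal sum `Pi = ⊕_{j=1}^r P_j` of rank-2 orthogonal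
projectors, each commuting with `Θ`. -/
theorem statement18 {m r : ℕ} (ε Pi : Matrix (Fin m) (Fin m) ℂ)
    (hε : ε ∈ Matrix.unitaryGroup (Fin m) ℂ)
    (hskew : εᵀ = -ε)
    (hproj : Pi * Pi = Pi)
    (hsa : Piᴴ = Pi)
    (hcomm : ε * Pi = Piᵀ * ε)
    (hrank : Pi.rank = 2 * r) :
    ∃ P : Fin r → Matrix (Fin m) (Fin m) ℂ,
      (∀ j, (P j)ᴴ = P j ∧ P j * P j = P j ∧ ε * P j = (P j)ᵀ * ε ∧
        (P j).rank = 2) ∧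
      (∀ j j', j ≠ j' → P j * P j' = 0) ∧
      ∑ j, P j = Pi := by
  induction r generalizing Pi with
  | zero =>
    refine ⟨finZeroElim, finZeroElim, fun j ↦ j.elim0, ?_⟩
    rw [Finset.univ_eq_empty, Finset.sum_empty, eq_zero_of_rank_eq_zero hrank]
  | succ r ih =>
    have hPi : IsStarProjection Pi := ⟨hproj, hsa⟩
    have hPi0 : Pi ≠ 0 := by
      rintro rfl
      simp at hrank
    obtain ⟨P₀, hP₀, hP₀comm, hP₀rank, hPiP₀⟩ :=
      exists_rank_two_subprojection hε hskew hPi hcomm hPi0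
    have hP₀Pi : P₀ * Pi = P₀ :=
      hP₀.isSelfAdjoint.mul_eq_self_of_mul_eq_self hPi.isSelfAdjoint hPiP₀
    have hrest : IsStarProjection (Pi - P₀) := hP₀.sub_of_mul_eq_left hPi hP₀Pi
    have hrest_rank := rank_sub_add_rank_of_isIdempotentElem hproj hP₀.isIdempotentElem
      hrest.isIdempotentElem
    obtain ⟨Q, hQ, hQorth, hQsum⟩ := ih (Pi - P₀) hrest.isIdempotentElem hrest.isSelfAdjoint
      (by rw [Matrix.mul_sub, hcomm, hP₀comm, transpose_sub, Matrix.sub_mul]) (by omega)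
    refine ⟨vecCons P₀ Q, Fin.cases ⟨hP₀.isSelfAdjoint, hP₀.isIdempotentElem, hP₀comm, hP₀rank⟩ hQ,
      fun _ _ h ↦ pairwise_mul_eq_zero_vecCons (fun i ↦ (hQ i).2.1) (hQorth · ·) ?_ ?_ h,
      ?_⟩
    · rw [hQsum, Matrix.mul_sub, hP₀Pi, hP₀.isIdempotentElem.eq, sub_self]
    · rw [hQsum, Matrix.sub_mul, hPiP₀, hP₀.isIdempotentElem.eq, sub_self]
    · rw [Fin.sum_univ_succ, cons_val_zero]
      simp only [cons_val_succ, hQsum, add_sub_cancel]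
end

section
/- Let α₀, α₁ : ℝ → U(m) be continuous, ℤ-periodic, TRS families (ε·α_i(k) = α_i(-k)ᵗ·ε), written as α_i(k) = ε⁻¹·γ_i(-k)ᵗ·ε·γ_i(k) with γ_i : ℝ → U(m) continuous and ℤ-periodic. Define α(k) := ε⁻¹·conj(γ₀(-k))·ε·α₁(k)·γ₀(k)*. Then α(k) = ε⁻¹·γ(-k)ᵗ·ε·γ(k) with γ(k) := γ₁(k)·γ₀(k)*, and in particular α is a continuous, ℤ-periodic, TRS family of unitary matrices, whose winding data satisfies deg(det γ) = deg(det γ₁) - deg(det γ₀). -/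
open Matrix

/-- A continuous real function taking only integer values has equal values at 0 and 1. -/
lemma aux_int_valued_const {ψ : ℝ → ℝ} (hc : Continuous ψ)
    (h : ∀ k, ∃ n : ℤ, ψ k = n) : ψ 1 = ψ 0 := by
  rcases h 0 with ⟨n0, h0⟩
  rcases h 1 with ⟨n1, h1⟩
  rw [h0, h1]
  norm_cast
  by_contra hne
  have key : ∀ t : ℝ, t ∈ Set.uIcc (ψ 0) (ψ 1) → ∃ n : ℤ, t = n := by
    intro t ht
    obtain ⟨c, _, hcval⟩ := intermediate_value_uIcc hc.continuousOn ht
    rcases h c with ⟨n, hn⟩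
    exact ⟨n, by rw [← hcval, hn]⟩
  have absurd : ∀ n n' : ℤ, (n' : ℝ) + 1/2 = (n : ℝ) → False := by
    intro n n' hn
    have h2 : (2*n : ℝ) = 2*n' + 1 := by push_cast; linarith
    have h3 : (2*n : ℤ) = 2*n' + 1 := by exact_mod_cast h2
    omega
  rcases lt_or_gt_of_ne hne with hlt | hlt
  · -- n1 < n0
    have hc1 : (n1 : ℝ) + 1 ≤ (n0 : ℝ) := by exact_mod_cast hlt
    have hmem : ((n1 : ℝ) + 1/2) ∈ Set.uIcc (ψ 0) (ψ 1) := by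
      rw [h0, h1, Set.mem_uIcc]
      right
      constructor <;> linarith
    obtain ⟨n, hn⟩ := key _ hmem
    exact absurd n n1 hn
  · -- n0 < n1
    have hc1 : (n0 : ℝ) + 1 ≤ (n1 : ℝ) := by exact_mod_cast hlt
    have hmem : ((n0 : ℝ) + 1/2) ∈ Set.uIcc (ψ 0) (ψ 1) := by
      rw [h0, h1, Set.mem_uIcc]
      left
      constructor <;> linarith
    obtain ⟨n, hn⟩ := key _ hmem
    exact absurd n n0 hn

/-- given two continuous `ℤ`-periodic TRS families `α₀, α₁` with
factorizations `α_i(k) = ε⁻¹ γ_i(-k)ᵀ ε γ_i(k)`, the family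
`α(k) := ε⁻¹ conj(γ₀(-k)) ε α₁(k) γ₀(k)*` satisfies
`α(k) = ε⁻¹ γ(-k)ᵀ ε γ(k)` with `γ(k) = γ₁(k) γ₀(k)*`; in particular `α` is a
continuous `ℤ`-periodic TRS family of unitaries, and its winding data satisfies
`deg(det γ) = deg(det γ₁) - deg(det γ₀)` (expressed via continuous phase lifts). -/
theorem statement19 {m : ℕ} (ε : Matrix (Fin m) (Fin m) ℂ)
    (hε : ε ∈ Matrix.unitaryGroup (Fin m) ℂ)
    (hskew : εᵀ = -ε)
    (α₀ α₁ γ₀ γ₁ : ℝ → Matrix (Fin m) (Fin m) ℂ)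
    (hα₀c : Continuous α₀) (hα₁c : Continuous α₁)
    (hγ₀c : Continuous γ₀) (hγ₁c : Continuous γ₁)
    (hα₀u : ∀ k, α₀ k ∈ Matrix.unitaryGroup (Fin m) ℂ)
    (hα₁u : ∀ k, α₁ k ∈ Matrix.unitaryGroup (Fin m) ℂ)
    (hγ₀u : ∀ k, γ₀ k ∈ Matrix.unitaryGroup (Fin m) ℂ)
    (hγ₁u : ∀ k, γ₁ k ∈ Matrix.unitaryGroup (Fin m) ℂ)
    (hα₀p : ∀ k, α₀ (k + 1) = α₀ k) (hα₁p : ∀ k, α₁ (k + 1) = α₁ k)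
    (hγ₀p : ∀ k, γ₀ (k + 1) = γ₀ k) (hγ₁p : ∀ k, γ₁ (k + 1) = γ₁ k)
    (hα₀TRS : ∀ k, ε * α₀ k = (α₀ (-k))ᵀ * ε)
    (hα₁TRS : ∀ k, ε * α₁ k = (α₁ (-k))ᵀ * ε)
    (hfac₀ : ∀ k, α₀ k = ε⁻¹ * (γ₀ (-k))ᵀ * ε * γ₀ k)
    (hfac₁ : ∀ k, α₁ k = ε⁻¹ * (γ₁ (-k))ᵀ * ε * γ₁ k)
    (α γ : ℝ → Matrix (Fin m) (Fin m) ℂ)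
    (hα : ∀ k, α k = ε⁻¹ * (γ₀ (-k)).map (starRingEnd ℂ) * ε * α₁ k * (γ₀ k)ᴴ)
    (hγ : ∀ k, γ k = γ₁ k * (γ₀ k)ᴴ) :
    (∀ k, α k = ε⁻¹ * (γ (-k))ᵀ * ε * γ k) ∧
    Continuous α ∧
    (∀ k, α k ∈ Matrix.unitaryGroup (Fin m) ℂ) ∧
    (∀ k, α (k + 1) = α k) ∧
    (∀ k, ε * α k = (α (-k))ᵀ * ε) ∧
    (∀ φ φ₀ φ₁ : ℝ → ℝ, Continuous φ → Continuous φ₀ → Continuous φ₁ →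
      (∀ k, (γ k).det = Complex.exp (2 * Real.pi * Complex.I * φ k)) →
      (∀ k, (γ₀ k).det = Complex.exp (2 * Real.pi * Complex.I * φ₀ k)) →
      (∀ k, (γ₁ k).det = Complex.exp (2 * Real.pi * Complex.I * φ₁ k)) →
      φ 1 - φ 0 = (φ₁ 1 - φ₁ 0) - (φ₀ 1 - φ₀ 0)) := by
  -- basic facts about ε
  have hεr : ε * star ε = 1 := hε.2
  have hεl : star ε * ε = 1 := hε.1
  have hεinv : ε⁻¹ = star ε := Matrix.inv_eq_left_inv hεl
  have hεεinv : ε * ε⁻¹ = 1 := by rw [hεinv]; exact hεr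
  have hεinvε : ε⁻¹ * ε = 1 := by rw [hεinv]; exact hεl
  -- the key factorization
  have hkey : ∀ k, α k = ε⁻¹ * (γ (-k))ᵀ * ε * γ k := by
    intro k
    have h1 : ε * α₁ k = (γ₁ (-k))ᵀ * ε * γ₁ k := by
      rw [hfac₁ k, ← Matrix.mul_assoc, ← Matrix.mul_assoc, ← Matrix.mul_assoc, hεεinv,
        Matrix.one_mul]
    have h2 : ((γ₀ (-k))ᴴ)ᵀ = (γ₀ (-k)).map (starRingEnd ℂ) := by
      ext i j
      simp [Matrix.conjTranspose_apply]
    rw [hα k, hγ k, hγ (-k), Matrix.transpose_mul, h2, hfac₁ k]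
    simp only [Matrix.mul_assoc]
    rw [← Matrix.mul_assoc ε ε⁻¹, hεεinv, Matrix.one_mul]
  -- unitarity of γ
  have hγu : ∀ k, γ k ∈ Matrix.unitaryGroup (Fin m) ℂ := by
    intro k
    rw [hγ k]
    exact mul_mem (hγ₁u k) (Unitary.star_mem (hγ₀u k))
  have htransp : ∀ (A : Matrix (Fin m) (Fin m) ℂ), A ∈ Matrix.unitaryGroup (Fin m) ℂ →
      Aᵀ ∈ Matrix.unitaryGroup (Fin m) ℂ := by
    intro A hA
    rw [Matrix.mem_unitaryGroup_iff]
    have : (Aᵀ : Matrix (Fin m) (Fin m) ℂ) * star Aᵀ = (Aᴴ * A)ᵀ := by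
      ext i j
      simp [Matrix.mul_apply, Matrix.conjTranspose_apply, Finset.mul_sum, mul_comm]
    rw [this, show (Aᴴ : Matrix (Fin m) (Fin m) ℂ) * A = 1 from hA.1, Matrix.transpose_one]
  -- unitarity of α
  have hαu : ∀ k, α k ∈ Matrix.unitaryGroup (Fin m) ℂ := by
    intro k
    rw [hkey k]
    have hεinvu : ε⁻¹ ∈ Matrix.unitaryGroup (Fin m) ℂ := by
      rw [hεinv]; exact Unitary.star_mem hε
    exact mul_mem (mul_mem (mul_mem hεinvu (htransp _ (hγu (-k)))) hε) (hγu k)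
  -- periodicity of α
  have hαp : ∀ k, α (k + 1) = α k := by
    intro k
    have hγ₀n : γ₀ (-(k + 1)) = γ₀ (-k) := by
      have := hγ₀p (-(k + 1))
      rw [show -(k + 1) + 1 = -k by ring] at this
      rw [← this]
    rw [hα (k + 1), hα k, hγ₀n, hα₁p, hγ₀p]
  -- TRS for α
  have hnegεinv : (-ε)⁻¹ = -ε⁻¹ := by
    apply Matrix.inv_eq_right_inv
    rw [neg_mul_neg, hεεinv]
  have hαTRS : ∀ k, ε * α k = (α (-k))ᵀ * ε := by
    intro k
    have hL : ε * α k = (γ (-k))ᵀ * ε * γ k := by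
      rw [hkey k, ← Matrix.mul_assoc, ← Matrix.mul_assoc, ← Matrix.mul_assoc, hεεinv,
        Matrix.one_mul]
    have hR : (α (-k))ᵀ * ε = (γ (-k))ᵀ * ε * γ k := by
      rw [hkey (-k), neg_neg]
      rw [Matrix.transpose_mul, Matrix.transpose_mul, Matrix.transpose_mul,
        Matrix.transpose_transpose, Matrix.transpose_nonsing_inv, hskew, hnegεinv]
      simp only [Matrix.mul_neg, Matrix.neg_mul, neg_neg, Matrix.mul_assoc, hεinvε,
        Matrix.mul_one]
    rw [hL, hR]
  refine ⟨hkey, ?_, hαu, hαp, hαTRS, ?_⟩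
  · -- continuity
    have : α = fun k => ε⁻¹ * (γ₀ (-k)).map (starRingEnd ℂ) * ε * α₁ k * (γ₀ k)ᴴ :=
      funext hα
    rw [this]
    have hγ₀n : Continuous fun k : ℝ => γ₀ (-k) := hγ₀c.comp continuous_neg
    exact ((((continuous_const.matrix_mul
      (hγ₀n.matrix_map Complex.continuous_conj)).matrix_mul
      continuous_const).matrix_mul hα₁c).matrix_mul hγ₀c.matrix_conjTranspose)
  · -- winding
    intro φ φ₀ φ₁ hφc hφ₀c hφ₁c hφ hφ₀ hφ₁
    have hdet : ∀ k : ℝ, Complex.exp (2 * Real.pi * Complex.I * φ k) =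
        Complex.exp (2 * Real.pi * Complex.I * (φ₁ k - φ₀ k)) := by
      intro k
      rw [← hφ k, hγ k, Matrix.det_mul, Matrix.det_conjTranspose, hφ₁ k, hφ₀ k]
      rw [show (star (Complex.exp (2 * Real.pi * Complex.I * φ₀ k)) : ℂ)
          = Complex.exp (-(2 * Real.pi * Complex.I * φ₀ k)) from ?_]
      · rw [← Complex.exp_add]
        congr 1
        push_cast
        ring
      · rw [Complex.star_def, ← Complex.exp_conj]
        congr 1
        simp only [_root_.map_mul, Complex.conj_I, Complex.conj_ofReal, map_ofNat]
        ring
    have hint : ∀ k : ℝ, ∃ n : ℤ, φ k - φ₁ k + φ₀ k = n := by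
      intro k
      have h1 : Complex.exp (2 * Real.pi * Complex.I * φ k -
          2 * Real.pi * Complex.I * (φ₁ k - φ₀ k)) = 1 := by
        rw [Complex.exp_sub, hdet k, div_self (Complex.exp_ne_zero _)]
      rw [Complex.exp_eq_one_iff] at h1
      obtain ⟨n, hn⟩ := h1
      refine ⟨n, ?_⟩
      have h2 : (2 * Real.pi * Complex.I) * ((φ k : ℂ) - φ₁ k + φ₀ k)
          = (2 * Real.pi * Complex.I) * (n : ℂ) := by
        rw [show ((n : ℂ) * (2 * ↑Real.pi * Complex.I)) = (2 * ↑Real.pi * Complex.I) * n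
          from mul_comm _ _] at hn
        rw [← hn]; push_cast; ring
      have h3 : (2 * (Real.pi : ℂ) * Complex.I) ≠ 0 := by
        simp [Real.pi_ne_zero, Complex.I_ne_zero, Complex.ofReal_eq_zero]
      have h4 : ((φ k : ℂ) - φ₁ k + φ₀ k) = (n : ℂ) := mul_left_cancel₀ h3 h2
      exact_mod_cast h4
    have hψc : Continuous fun k => φ k - φ₁ k + φ₀ k :=
      (hφc.sub hφ₁c).add hφ₀c
    have := aux_int_valued_const hψc hint
    linarith
end
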